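/- arXiv:1612.03519 — 10 statements merged into one kernel-verified Lean document; each statement's English description precedes it below -/
import Mathlib

section
/- Let n1 ≤ n2 ≤ n3 be positive integers with N = n1 + n2 + n3, and let E be the set of edges of C(n1,n2,n3), i.e., E = { {k, k+n1} : k ∈ ZMod N } ∪ { {k, k+n2} : k ∈ ZMod N } ∪ { {k, k+n3} : k ∈ ZMod N }. Then the cardinality of E is: 3N if n1 < n2 < n3 and n3 ≠ n1 + n2; 5N/2 if n1 < n2 < n3 and n3 = n1 + n2; 2N if n1 = n2 < n3 and n3 ≠ n1 + n2; 3N/2 if n1 = n2 < n3 and n3 = n1 + n2; 2N if n1 < n2 = n3; and N if n1 = n2 = n3. -/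
/-- The set of edges of length `m` in `ZMod N`: all translates of `{0, m}`. -/
def edgeSet (N m : ℕ) : Set (Finset (ZMod N)) :=
  {e | ∃ k : ZMod N, e = {k, k + (m : ZMod N)}}

open Finset

lemma finset_pair_eq {α : Type*} [DecidableEq α] {a b c d : α} :
    ({a,b} : Finset α) = {c,d} ↔ (a = c ∧ b = d) ∨ (a = d ∧ b = c) := by
  rw [← Finset.coe_inj, Finset.coe_pair, Finset.coe_pair, Set.pair_eq_pair_iff]

lemma cast_inj_of_lt {N m m' : ℕ} (hm : m < N) (hm' : m' < N)
    (h : (m : ZMod N) = (m' : ZMod N)) : m = m' := by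
  have := congrArg ZMod.val h
  rwa [ZMod.val_cast_of_lt hm, ZMod.val_cast_of_lt hm'] at this

lemma sum_ne_zero {N m m' : ℕ} (hm : 0 < m) (hmN : m < N) (hm'N : m' < N)
    (h : m + m' ≠ N) : (m : ZMod N) + (m' : ZMod N) ≠ 0 := by
  intro h0
  rw [← Nat.cast_add, ZMod.natCast_eq_zero_iff] at h0
  rcases h0 with ⟨c, hc⟩
  have hc2 : c < 2 := by nlinarith
  interval_cases c <;> omega

lemma edgeSet_coe (N m : ℕ) [NeZero N] :
    edgeSet N m =
      ↑((Finset.univ : Finset (ZMod N)).image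
        (fun k => ({k, k + (m : ZMod N)} : Finset (ZMod N)))) := by
  ext e
  simp [edgeSet, eq_comm]

lemma edgeSet_finite (N m : ℕ) [NeZero N] : (edgeSet N m).Finite := by
  rw [edgeSet_coe]; exact Finset.finite_toSet _

lemma ncard_edgeSet (N m : ℕ) (hm : 0 < m) (hmN : m < N) (h2 : m + m ≠ N) :
    (edgeSet N m).ncard = N := by
  haveI : NeZero N := ⟨by omega⟩
  rw [edgeSet_coe, Set.ncard_coe_finset]
  rw [Finset.card_image_of_injective _ ?_, Finset.card_univ, ZMod.card]
  intro a b hab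
  simp only [finset_pair_eq] at hab
  rcases hab with ⟨h, -⟩ | ⟨h1, h2'⟩
  · exact h
  · exfalso
    apply sum_ne_zero hm hmN hmN h2
    have : b + ((m : ZMod N) + (m : ZMod N)) = b := by rw [← add_assoc, ← h1, h2']
    simpa using this

lemma ncard_edgeSet_half (N m : ℕ) (hm : 0 < m) (h2 : m + m = N) :
    2 * (edgeSet N m).ncard = N := by
  haveI : NeZero N := ⟨by omega⟩
  have hmN : m < N := by omega
  have hm0 : (m : ZMod N) ≠ 0 := by
    intro h0
    rw [ZMod.natCast_eq_zero_iff] at h0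
    exact absurd (Nat.le_of_dvd hm h0) (by omega)
  have hmm : (m : ZMod N) + (m : ZMod N) = 0 := by
    rw [← Nat.cast_add, h2, ZMod.natCast_self]
  rw [edgeSet_coe, Set.ncard_coe_finset]
  set f : ZMod N → Finset (ZMod N) := fun k => {k, k + (m : ZMod N)} with hf
  have key : (Finset.univ : Finset (ZMod N)).card
      = ∑ e ∈ Finset.univ.image f, (Finset.univ.filter (fun k => f k = e)).card :=
    Finset.card_eq_sum_card_fiberwise (fun k _ => Finset.mem_image_of_mem f (Finset.mem_univ k))
  have hfib : ∀ e ∈ Finset.univ.image f, (Finset.univ.filter (fun k => f k = e)).card = 2 := by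
    intro e he
    obtain ⟨k0, -, hk0⟩ := Finset.mem_image.mp he
    have : Finset.univ.filter (fun k => f k = e) = {k0, k0 + (m : ZMod N)} := by
      ext k
      simp only [Finset.mem_filter, Finset.mem_univ, true_and, Finset.mem_insert,
        Finset.mem_singleton, ← hk0, hf]
      constructor
      · intro h
        rcases finset_pair_eq.mp h with ⟨h, -⟩ | ⟨h, -⟩
        · exact Or.inl h
        · exact Or.inr h
      · rintro (rfl | rfl)
        · rfl
        · apply finset_pair_eq.mpr
          right
          constructor
          · rfl
          · rw [add_assoc, hmm, add_zero]
    rw [this, Finset.card_insert_of_notMem (by simp [hm0]), Finset.card_singleton]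
  rw [Finset.sum_congr rfl hfib, Finset.sum_const, smul_eq_mul, Finset.card_univ, ZMod.card] at key
  omega

lemma edgeSet_disjoint (N m m' : ℕ) (hm : 0 < m) (hmN : m < N) (hm' : 0 < m') (hm'N : m' < N)
    (hne : m ≠ m') (hsum : m + m' ≠ N) : Disjoint (edgeSet N m) (edgeSet N m') := by
  rw [Set.disjoint_left]
  rintro e ⟨k, rfl⟩ ⟨k', hk'⟩
  rcases finset_pair_eq.mp hk' with ⟨h1, h2⟩ | ⟨h1, h2⟩
  · subst h1
    exact hne (cast_inj_of_lt hmN hm'N (by simpa using h2))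
  · apply sum_ne_zero hm hmN hm'N hsum
    have : k' + ((m' : ZMod N) + (m : ZMod N)) = k' := by rw [← add_assoc, ← h1, h2]
    have := by simpa using this
    rw [add_comm]; exact this

/-- the number of edges of `C(n1,n2,n3)` in the six cases. -/
theorem stmt_2 (n1 n2 n3 N : ℕ) (h1 : 0 < n1) (h12 : n1 ≤ n2) (h23 : n2 ≤ n3)
    (hN : N = n1 + n2 + n3)
    (E : Set (Finset (ZMod N))) (hE : E = edgeSet N n1 ∪ edgeSet N n2 ∪ edgeSet N n3) :
    (n1 < n2 ∧ n2 < n3 ∧ n3 ≠ n1 + n2 → E.ncard = 3 * N) ∧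
    (n1 < n2 ∧ n2 < n3 ∧ n3 = n1 + n2 → 2 * E.ncard = 5 * N) ∧
    (n1 = n2 ∧ n2 < n3 ∧ n3 ≠ n1 + n2 → E.ncard = 2 * N) ∧
    (n1 = n2 ∧ n2 < n3 ∧ n3 = n1 + n2 → 2 * E.ncard = 3 * N) ∧
    (n1 < n2 ∧ n2 = n3 → E.ncard = 2 * N) ∧
    (n1 = n2 ∧ n2 = n3 → E.ncard = N) := by
  haveI : NeZero N := ⟨by omega⟩
  have h2 : 0 < n2 := by omega
  have h3 : 0 < n3 := by omega
  have h1N : n1 < N := by omega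
  have h2N : n2 < N := by omega
  have h3N : n3 < N := by omega
  have s12 : n1 + n2 ≠ N := by omega
  have s13 : n1 + n3 ≠ N := by omega
  have s23 : n2 + n3 ≠ N := by omega
  have d11 : n1 + n1 ≠ N := by omega
  have d22 : n2 + n2 ≠ N := by omega
  have c1 : (edgeSet N n1).ncard = N := ncard_edgeSet N n1 h1 h1N d11
  have c2 : (edgeSet N n2).ncard = N := ncard_edgeSet N n2 h2 h2N d22
  have f1 := edgeSet_finite N n1
  have f2 := edgeSet_finite N n2
  have f3 := edgeSet_finite N n3
  refine ⟨?_, ?_, ?_, ?_, ?_, ?_⟩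
  · rintro ⟨ha, hb, hc⟩
    have d33 : n3 + n3 ≠ N := by omega
    have c3 : (edgeSet N n3).ncard = N := ncard_edgeSet N n3 h3 h3N d33
    have D12 := edgeSet_disjoint N n1 n2 h1 h1N h2 h2N (by omega) s12
    have D13 := edgeSet_disjoint N n1 n3 h1 h1N h3 h3N (by omega) s13
    have D23 := edgeSet_disjoint N n2 n3 h2 h2N h3 h3N (by omega) s23
    rw [hE, Set.ncard_union_eq (Set.disjoint_union_left.mpr ⟨D13, D23⟩) (f1.union f2) f3,
      Set.ncard_union_eq D12 f1 f2, c1, c2, c3]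
    ring
  · rintro ⟨ha, hb, hc⟩
    have c3 : 2 * (edgeSet N n3).ncard = N := ncard_edgeSet_half N n3 h3 (by omega)
    have D12 := edgeSet_disjoint N n1 n2 h1 h1N h2 h2N (by omega) s12
    have D13 := edgeSet_disjoint N n1 n3 h1 h1N h3 h3N (by omega) s13
    have D23 := edgeSet_disjoint N n2 n3 h2 h2N h3 h3N (by omega) s23
    rw [hE, Set.ncard_union_eq (Set.disjoint_union_left.mpr ⟨D13, D23⟩) (f1.union f2) f3,
      Set.ncard_union_eq D12 f1 f2, c1, c2]
    omega
  · rintro ⟨ha, hb, hc⟩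
    have d33 : n3 + n3 ≠ N := by omega
    have c3 : (edgeSet N n3).ncard = N := ncard_edgeSet N n3 h3 h3N d33
    have D23 := edgeSet_disjoint N n2 n3 h2 h2N h3 h3N (by omega) s23
    rw [hE, ha, Set.union_self, Set.ncard_union_eq D23 f2 f3, c2, c3]
    ring
  · rintro ⟨ha, hb, hc⟩
    have c3 : 2 * (edgeSet N n3).ncard = N := ncard_edgeSet_half N n3 h3 (by omega)
    have D23 := edgeSet_disjoint N n2 n3 h2 h2N h3 h3N (by omega) s23
    rw [hE, ha, Set.union_self, Set.ncard_union_eq D23 f2 f3, c2]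
    omega
  · rintro ⟨ha, hb⟩
    have D12 := edgeSet_disjoint N n1 n2 h1 h1N h2 h2N (by omega) s12
    rw [hE, ← hb, Set.union_assoc, Set.union_self, Set.ncard_union_eq D12 f1 f2, c1, c2]
    ring
  · rintro ⟨ha, hb⟩
    have d33 : n3 + n3 ≠ N := by omega
    have c3 : (edgeSet N n3).ncard = N := ncard_edgeSet N n3 h3 h3N d33
    rw [hE, ha, Set.union_self, hb, Set.union_self, c3]
end

section
/- Let n1 < n2 < n3 be positive integers with N = n1 + n2 + n3. Then the set of faces of C(n1,n2,n3), i.e., the set of all subsets of ZMod N of the form {k, k+n1, k+n1+n2} or {k, k-n1, k-n1-n2} for k ∈ ZMod N, has exactly 2N elements. -/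
/-- helper: casts of distinct small naturals into `ZMod N` are distinct. -/
lemma cast_ne (N u v : ℕ) (h1 : u ≠ v) (h2 : v ≠ u + N) (h3 : u ≠ v + N)
    (h4 : u < v + 2*N) (h5 : v < u + 2*N) : (u : ZMod N) ≠ (v : ZMod N) := by
  intro h
  obtain ⟨m, hm⟩ := ((ZMod.natCast_eq_natCast_iff u v N).mp h).dvd
  have hN : (0:ℤ) ≤ N := Int.natCast_nonneg N
  have h4' : (u:ℤ) < v + 2*N := by exact_mod_cast h4
  have h5' : (v:ℤ) < u + 2*N := by exact_mod_cast h5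
  have hmb : -2 < m ∧ m < 2 := by
    constructor <;> by_contra hc <;> push_neg at hc <;> nlinarith
  obtain ⟨hl, hr⟩ := hmb
  interval_cases m <;> [skip; skip; skip] <;> omega

def S (N : ℕ) (k : ZMod N) (p q : ℕ) : Finset (ZMod N) := {k, k + p, k + p + q}

lemma inj1 (N p q : ℕ) (hp : 0 < p) (hq : 0 < q) (hpq : p ≠ q) (hs : p + q < N)
    (hx : p + 2*q ≠ N) (k j : ZMod N) (h : S N k p q = S N j p q) : k = j := by
  have hk : k ∈ S N j p q := h ▸ (by simp [S])
  simp only [S, Finset.mem_insert, Finset.mem_singleton] at hk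
  rcases hk with hk | hk | hk
  · exact hk
  · exfalso
    have hm : (j:ZMod N) + p + q ∈ S N k p q := by rw [h]; simp [S]
    rw [hk] at hm
    simp only [S, Finset.mem_insert, Finset.mem_singleton] at hm
    rcases hm with e | e | e
    · exact cast_ne N (p+q) p (by omega) (by omega) (by omega) (by omega) (by omega)
        (by push_cast; linear_combination e)
    · exact cast_ne N (p+q) (2*p) (by omega) (by omega) (by omega) (by omega) (by omega)
        (by push_cast; linear_combination e)
    · exact cast_ne N (p+q) (2*p+q) (by omega) (by omega) (by omega) (by omega) (by omega)
        (by push_cast; linear_combination e)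
  · exfalso
    have hm : (j:ZMod N) + p ∈ S N k p q := by rw [h]; simp [S]
    rw [hk] at hm
    simp only [S, Finset.mem_insert, Finset.mem_singleton] at hm
    rcases hm with e | e | e
    · exact cast_ne N p (p+q) (by omega) (by omega) (by omega) (by omega) (by omega)
        (by push_cast; linear_combination e)
    · exact cast_ne N p (2*p+q) (by omega) (by omega) (by omega) (by omega) (by omega)
        (by push_cast; linear_combination e)
    · exact cast_ne N p (2*p+2*q) (by omega) (by omega) (by omega) (by omega) (by omega)
        (by push_cast; linear_combination e)

lemma inj2 (a b c N : ℕ) (h1 : 0 < a) (h12 : a < b) (h23 : b < c) (hN : N = a+b+c)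
    (k j : ZMod N) (h : S N k a b = S N j c b) : False := by
  have hk : k ∈ S N j c b := h ▸ (by simp [S])
  simp only [S, Finset.mem_insert, Finset.mem_singleton] at hk
  rcases hk with hk | hk | hk
  · have hm : (j:ZMod N) + a ∈ S N j c b := by rw [← h, hk]; simp [S]
    simp only [S, Finset.mem_insert, Finset.mem_singleton] at hm
    rcases hm with e | e | e
    · exact cast_ne N a 0 (by omega) (by omega) (by omega) (by omega) (by omega)
        (by push_cast; linear_combination e)
    · exact cast_ne N a c (by omega) (by omega) (by omega) (by omega) (by omega)
        (by push_cast; linear_combination e)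
    · exact cast_ne N a (c+b) (by omega) (by omega) (by omega) (by omega) (by omega)
        (by push_cast; linear_combination e)
  · have hm : (j:ZMod N) + c + b ∈ S N k a b := by rw [h]; simp [S]
    rw [hk] at hm
    simp only [S, Finset.mem_insert, Finset.mem_singleton] at hm
    rcases hm with e | e | e
    · exact cast_ne N (c+b) c (by omega) (by omega) (by omega) (by omega) (by omega)
        (by push_cast; linear_combination e)
    · exact cast_ne N (c+b) (c+a) (by omega) (by omega) (by omega) (by omega) (by omega)
        (by push_cast; linear_combination e)
    · exact cast_ne N (c+b) (c+a+b) (by omega) (by omega) (by omega) (by omega) (by omega)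
        (by push_cast; linear_combination e)
  · have hm : (j:ZMod N) + c ∈ S N k a b := by rw [h]; simp [S]
    rw [hk] at hm
    simp only [S, Finset.mem_insert, Finset.mem_singleton] at hm
    rcases hm with e | e | e
    · exact cast_ne N c (c+b) (by omega) (by omega) (by omega) (by omega) (by omega)
        (by push_cast; linear_combination e)
    · exact cast_ne N c (c+b+a) (by omega) (by omega) (by omega) (by omega) (by omega)
        (by push_cast; linear_combination e)
    · exact cast_ne N c (c+a+2*b) (by omega) (by omega) (by omega) (by omega) (by omega)
        (by push_cast; linear_combination e)

lemma I_eq (a b c N : ℕ) (hN : N = a+b+c) (k : ZMod N) :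
    ({k, k - (a:ZMod N), k - (a:ZMod N) - (b:ZMod N)} : Finset (ZMod N)) = S N k c b := by
  have h0 : ((a:ZMod N) + b + c) = 0 := by
    have h : ((a + b + c : ℕ) : ZMod N) = 0 := by rw [← hN]; exact ZMod.natCast_self N
    push_cast at h; exact h
  have e1 : k - (a:ZMod N) = k + c + b := by linear_combination -h0
  have e2 : k - (a:ZMod N) - b = k + c := by linear_combination -h0
  rw [e2, e1]
  ext x
  simp only [S, Finset.mem_insert, Finset.mem_singleton]
  tauto

/-- The set of faces (2-simplices) of the generalized Tonnetz `C(n1,n2,n3)`: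
all translates of `{0, n1, n1+n2}` and their inversions. -/
def faceSet (N n1 n2 : ℕ) : Set (Finset (ZMod N)) :=
  {f | ∃ k : ZMod N,
    f = {k, k + (n1 : ZMod N), k + (n1 : ZMod N) + (n2 : ZMod N)} ∨
    f = {k, k - (n1 : ZMod N), k - (n1 : ZMod N) - (n2 : ZMod N)}}

/-- if `n1 < n2 < n3` then `C(n1,n2,n3)` has exactly `2N` faces. -/
theorem stmt_4 (n1 n2 n3 N : ℕ) (h1 : 0 < n1) (h12 : n1 < n2) (h23 : n2 < n3)
    (hN : N = n1 + n2 + n3) :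
    (faceSet N n1 n2).ncard = 2 * N := by
  classical
  set F : Bool × ZMod N → Finset (ZMod N) := fun x =>
    if x.1 then S N x.2 n3 n2 else S N x.2 n1 n2 with hF
  have hrange : faceSet N n1 n2 = Set.range F := by
    ext f
    simp only [faceSet, Set.mem_setOf_eq, Set.mem_range]
    constructor
    · rintro ⟨k, hf | hf⟩
      · exact ⟨(false, k), by simp only [hF, if_neg Bool.false_ne_true]; rw [hf]; rfl⟩
      · exact ⟨(true, k), by simp only [hF, if_pos rfl]; rw [hf, I_eq n1 n2 n3 N hN k]⟩
    · rintro ⟨⟨b, k⟩, rfl⟩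
      cases b
      · exact ⟨k, Or.inl rfl⟩
      · exact ⟨k, Or.inr (by simp only [hF, if_pos rfl]; rw [I_eq n1 n2 n3 N hN k])⟩
  have hinj : Function.Injective F := by
    rintro ⟨b1, k1⟩ ⟨b2, k2⟩ h
    cases b1 <;> cases b2 <;>
      simp only [hF, if_pos rfl, if_neg Bool.false_ne_true] at h <;>
      simp only [Prod.mk.injEq]
    · exact ⟨trivial, inj1 N n1 n2 h1 (by omega) (by omega) (by omega) (by omega) k1 k2 h⟩
    · exact absurd h (fun h => inj2 n1 n2 n3 N h1 h12 h23 hN k1 k2 h)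
    · exact absurd h.symm (fun h => inj2 n1 n2 n3 N h1 h12 h23 hN k2 k1 h)
    · exact ⟨trivial, inj1 N n3 n2 (by omega) (by omega) (by omega) (by omega) (by omega) k1 k2 h⟩
  rw [hrange, ← Nat.card_coe_set_eq, Nat.card_range_of_injective hinj,
    Nat.card_prod, Nat.card_zmod]
  simp [Nat.card_eq_fintype_card]
end

section
/- Let n1 ≤ n2 ≤ n3 be positive integers with N = n1 + n2 + n3, and suppose either n1 = n2 < n3 or n1 < n2 = n3. Then the set of faces of C(n1,n2,n3), i.e., the set of all subsets of ZMod N of the form {k, k+n1, k+n1+n2} or {k, k-n1, k-n1-n2} for k ∈ ZMod N, has exactly N elements. -/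
/-- if `n1 = n2 < n3` or `n1 < n2 = n3` then `C(n1,n2,n3)` has
exactly `N` faces. -/
theorem stmt_5 (n1 n2 n3 N : ℕ) (h1 : 0 < n1) (h12 : n1 ≤ n2) (h23 : n2 ≤ n3)
    (hN : N = n1 + n2 + n3)
    (hcase : (n1 = n2 ∧ n2 < n3) ∨ (n1 < n2 ∧ n2 = n3)) :
    (faceSet N n1 n2).ncard = N := by
  have hn13 : n1 < n3 := by rcases hcase with ⟨he, hl⟩ | ⟨hl, he⟩ <;> omega
  have hNpos : 0 < N := by omega
  haveI : NeZero N := ⟨hNpos.ne'⟩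
  have hne : ∀ x : ℕ, 0 < x → x < N → (x : ZMod N) ≠ 0 := by
    intro x hx1 hx2 h
    have hd := (ZMod.natCast_eq_zero_iff x N).mp h
    have := Nat.le_of_dvd hx1 hd
    omega
  have e1 : (n1 : ZMod N) ≠ 0 := hne n1 h1 (by omega)
  have e12 : (n1 : ZMod N) + n2 ≠ 0 := by
    have := hne (n1 + n2) (by omega) (by omega)
    push_cast at this; exact this
  have e11 : (n1 : ZMod N) + n1 ≠ 0 := by
    have := hne (n1 + n1) (by omega) (by omega)
    push_cast at this; exact this
  have e112 : (n1 : ZMod N) + n1 + n2 ≠ 0 := by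
    have := hne (n1 + n1 + n2) (by omega) (by omega)
    push_cast at this; exact this
  set f : ZMod N → Finset (ZMod N) :=
    fun k => {k, k + (n1 : ZMod N), k + (n1 : ZMod N) + (n2 : ZMod N)} with hf
  have heq : faceSet N n1 n2 = Set.range f := by
    ext s
    constructor
    · rintro ⟨k, rfl | rfl⟩
      · exact ⟨k, rfl⟩
      · rcases hcase with ⟨he, _⟩ | ⟨_, he⟩
        · -- n1 = n2
          subst he
          refine ⟨k - (n1 : ZMod N) - (n1 : ZMod N), ?_⟩
          simp only [hf]
          have e2' : k - (n1 : ZMod N) - n1 + n1 + n1 = k := by ring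
          have e1' : k - (n1 : ZMod N) - n1 + n1 = k - n1 := by ring
          rw [e2', e1']
          ext x
          simp only [Finset.mem_insert, Finset.mem_singleton]
          tauto
        · -- n2 = n3, so N = n1 + 2*n2
          subst he
          have hz : (n1 : ZMod N) + n2 + n2 = 0 := by
            have : ((n1 + n2 + n2 : ℕ) : ZMod N) = 0 := by
              rw [show n1 + n2 + n2 = N by omega]; exact ZMod.natCast_self N
            push_cast at this; exact this
          refine ⟨k - (n1 : ZMod N), ?_⟩
          simp only [hf]
          have e2' : k - (n1 : ZMod N) + n1 + n2 = k - n1 - n2 := by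
            linear_combination hz
          have e1' : k - (n1 : ZMod N) + n1 = k := by ring
          rw [e2', e1']
          ext x
          simp only [Finset.mem_insert, Finset.mem_singleton]
          tauto
    · rintro ⟨k, rfl⟩
      exact ⟨k, Or.inl rfl⟩
  have hinj : Function.Injective f := by
    intro a b hab
    have ha : a ∈ f b := by rw [← hab]; simp [hf]
    have hb : b ∈ f a := by rw [hab]; simp [hf]
    have hac : a + (n1 : ZMod N) ∈ f b := by rw [← hab]; simp [hf]
    simp only [hf, Finset.mem_insert, Finset.mem_singleton] at ha hb hac
    rcases ha with h | h | h
    · exact h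
    · rcases hb with hb | hb | hb
      · exact hb.symm
      · exact absurd (show (n1 : ZMod N) + n1 = 0 by linear_combination -h - hb) e11
      · exact absurd (show (n1 : ZMod N) + n1 + n2 = 0 by linear_combination -h - hb) e112
    · rcases hac with hc | hc | hc
      · exact absurd (show (n1 : ZMod N) + n1 + n2 = 0 by linear_combination hc - h) e112
      · exact absurd (show (n1 : ZMod N) + n2 = 0 by linear_combination hc - h) e12
      · exact absurd (show (n1 : ZMod N) = 0 by linear_combination hc - h) e1
  rw [heq, ← Nat.card_coe_set_eq, Nat.card_range_of_injective hinj, Nat.card_zmod]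
end

section
/- Let n1 < n2 < n3 be positive integers with N = n1 + n2 + n3. Then no face of C(n1,n2,n3) is simultaneously of Type I and of Type II; that is, for all k, l ∈ ZMod N, the subsets {k, k+n1, k+n1+n2} and {l, l-n1, l-n1-n2} of ZMod N are not equal. -/
/-- if `n1 < n2 < n3` and `N = n1 + n2 + n3`, then no face of
`C(n1,n2,n3)` is simultaneously of Type I and Type II: the sets
`{k, k+n1, k+n1+n2}` and `{l, l-n1, l-n1-n2}` are never equal. -/
theorem stmt_6 (n1 n2 n3 N : ℕ) (h1 : 0 < n1) (h12 : n1 < n2) (h23 : n2 < n3)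
    (hN : N = n1 + n2 + n3) :
    ∀ k l : ZMod N,
      ({k, k + (n1 : ZMod N), k + (n1 : ZMod N) + (n2 : ZMod N)} : Finset (ZMod N)) ≠
      ({l, l - (n1 : ZMod N), l - (n1 : ZMod N) - (n2 : ZMod N)} : Finset (ZMod N)) := by
  subst hN
  intro k l h
  haveI : NeZero (n1 + n2 + n3) := ⟨by omega⟩
  have hz : ((n1 : ℕ) : ZMod (n1 + n2 + n3)) + (n2 : ℕ) + (n3 : ℕ) = 0 := by
    rw [← Nat.cast_add, ← Nat.cast_add, ZMod.natCast_self]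
  have key : ∀ a b : ℕ, a < n1 + n2 + n3 → b < n1 + n2 + n3 → (a : ZMod (n1 + n2 + n3)) = (b : ZMod (n1 + n2 + n3)) → a = b := by
    intro a b ha hb hab
    have h1 : ((a : ZMod (n1 + n2 + n3))).val = a := ZMod.val_cast_of_lt ha
    have h2 : ((b : ZMod (n1 + n2 + n3))).val = b := ZMod.val_cast_of_lt hb
    rw [hab] at h1
    omega
  have e1 : l - (n1 : ZMod (n1 + n2 + n3)) = l + ((n2 + n3 : ℕ) : ZMod (n1 + n2 + n3)) := by
    push_cast
    linear_combination -hz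
  have e2 : l - (n1 : ZMod (n1 + n2 + n3)) - (n2 : ZMod (n1 + n2 + n3)) = l + ((n3 : ℕ) : ZMod (n1 + n2 + n3)) := by
    push_cast
    linear_combination -hz
  rw [e2, e1] at h
  have hset := Finset.ext_iff.mp h
  have hk := (hset k).mp (by simp)
  simp only [Finset.mem_insert, Finset.mem_singleton] at hk
  rcases hk with hk | hk | hk
  · subst hk
    have hm := (hset (k + (n1 : ZMod (n1 + n2 + n3)))).mp (by simp)
    simp only [Finset.mem_insert, Finset.mem_singleton] at hm
    push_cast at hm
    rcases hm with hm | hm | hm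
    · have : ((n1 : ℕ) : ZMod (n1 + n2 + n3)) = ((0 : ℕ) : ZMod (n1 + n2 + n3)) := by
        push_cast; linear_combination hm
      exact absurd (key n1 0 (by omega) (by omega) this) (by omega)
    · have : ((n1 : ℕ) : ZMod (n1 + n2 + n3)) = ((n2 + n3 : ℕ) : ZMod (n1 + n2 + n3)) := by
        push_cast; linear_combination hm
      exact absurd (key n1 (n2 + n3) (by omega) (by omega) this) (by omega)
    · have : ((n1 : ℕ) : ZMod (n1 + n2 + n3)) = ((n3 : ℕ) : ZMod (n1 + n2 + n3)) := by
        push_cast; linear_combination hm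
      exact absurd (key n1 n3 (by omega) (by omega) this) (by omega)
  · have hm := (hset (k + (n1 : ZMod (n1 + n2 + n3)) + (n2 : ZMod (n1 + n2 + n3)))).mp (by simp)
    simp only [Finset.mem_insert, Finset.mem_singleton] at hm
    rw [hk] at hm
    push_cast at hm
    rcases hm with hm | hm | hm
    · have : ((n2 : ℕ) : ZMod (n1 + n2 + n3)) = ((0 : ℕ) : ZMod (n1 + n2 + n3)) := by
        push_cast; linear_combination hm - hz
      exact absurd (key n2 0 (by omega) (by omega) this) (by omega)
    · have : ((n1 + n2 : ℕ) : ZMod (n1 + n2 + n3)) = ((0 : ℕ) : ZMod (n1 + n2 + n3)) := by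
        push_cast; linear_combination hm
      exact absurd (key (n1 + n2) 0 (by omega) (by omega) this) (by omega)
    · have : ((n1 + 2 * n2 : ℕ) : ZMod (n1 + n2 + n3)) = ((0 : ℕ) : ZMod (n1 + n2 + n3)) := by
        push_cast; linear_combination hm
      exact absurd (key (n1 + 2 * n2) 0 (by omega) (by omega) this) (by omega)
  · have hm := (hset (k + (n1 : ZMod (n1 + n2 + n3)))).mp (by simp)
    simp only [Finset.mem_insert, Finset.mem_singleton] at hm
    rw [hk] at hm
    push_cast at hm
    rcases hm with hm | hm | hm
    · have : ((n1 + n3 : ℕ) : ZMod (n1 + n2 + n3)) = ((0 : ℕ) : ZMod (n1 + n2 + n3)) := by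
        push_cast; linear_combination hm
      exact absurd (key (n1 + n3) 0 (by omega) (by omega) this) (by omega)
    · have : ((n1 + n3 : ℕ) : ZMod (n1 + n2 + n3)) = ((n2 + n3 : ℕ) : ZMod (n1 + n2 + n3)) := by
        push_cast; linear_combination hm
      exact absurd (key (n1 + n3) (n2 + n3) (by omega) (by omega) this) (by omega)
    · have : ((n1 : ℕ) : ZMod (n1 + n2 + n3)) = ((0 : ℕ) : ZMod (n1 + n2 + n3)) := by
        push_cast; linear_combination hm
      exact absurd (key n1 0 (by omega) (by omega) this) (by omega)
end

section
/- Let n1 ≤ n2 ≤ n3 be positive integers with N = n1 + n2 + n3, let V = N be the number of vertices, E the number of edges, and F the number of faces of C(n1,n2,n3). Then the Euler characteristic χ = V - E + F satisfies: χ = 0 if n1 < n2 < n3 and n3 ≠ n1 + n2; χ = N/2 if n1 < n2 < n3 and n3 = n1 + n2; χ = 0 if n1 = n2 < n3 and n3 ≠ n1 + n2; χ = N/2 if n1 = n2 < n3 and n3 = n1 + n2; χ = 0 if n1 < n2 = n3; and χ = N/3 if n1 = n2 = n3. -/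
open Finset

section Aux

lemma fpair_eq {α : Type*} [DecidableEq α] {a b c d : α} :
    ({a, b} : Finset α) = {c, d} ↔ (a = c ∧ b = d) ∨ (a = d ∧ b = c) := by
  constructor
  · intro h
    have ha : a ∈ ({c, d} : Finset α) := h ▸ (by simp)
    have hb : b ∈ ({c, d} : Finset α) := h ▸ (by simp)
    have hc : c ∈ ({a, b} : Finset α) := h ▸ (by simp)
    have hd : d ∈ ({a, b} : Finset α) := h ▸ (by simp)
    simp only [mem_insert, mem_singleton] at ha hb hc hd
    rcases ha with rfl | rfl <;> rcases hb with rfl | rfl <;> tauto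
  · rintro (⟨rfl, rfl⟩ | ⟨rfl, rfl⟩)
    · rfl
    · exact Finset.pair_comm a b

lemma card_image_mul_fiber {α β : Type*} [Fintype α] [DecidableEq α] [DecidableEq β]
    (f : α → β) (d : ℕ)
    (h : ∀ a : α, (Finset.univ.filter fun x => f x = f a).card = d) :
    (Finset.univ.image f).card * d = Fintype.card α := by
  rw [← Finset.card_univ, Finset.card_eq_sum_card_image f Finset.univ]
  rw [Finset.sum_congr rfl (fun b hb => ?_), Finset.sum_const, smul_eq_mul, mul_comm]
  obtain ⟨a, -, rfl⟩ := Finset.mem_image.mp hb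
  exact h a

lemma cast_ne_zero {N x : ℕ} (h0 : 0 < x) (h1 : x < 2 * N) (h2 : x ≠ N) :
    (x : ZMod N) ≠ 0 := by
  intro he
  obtain ⟨k, hk⟩ := (ZMod.natCast_eq_zero_iff x N).mp he
  rcases k with _ | _ | k
  · omega
  · omega
  · have : 2 * N ≤ N * (k + 1 + 1) := by nlinarith
    omega

lemma cast_inj_ne {N x y : ℕ} [NeZero N] (hx : x < N) (hy : y < N) (hxy : x ≠ y) :
    (x : ZMod N) ≠ (y : ZMod N) := fun he =>
  hxy (by rw [← ZMod.val_cast_of_lt hx, ← ZMod.val_cast_of_lt hy, he])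

lemma triple_perm1 {α : Type*} [DecidableEq α] (x y z : α) :
    ({x, y, z} : Finset α) = {z, y, x} := by
  ext t; simp only [Finset.mem_insert, Finset.mem_singleton]; tauto

lemma triple_perm2 {α : Type*} [DecidableEq α] (x y z : α) :
    ({x, y, z} : Finset α) = {y, x, z} := by
  ext t; simp only [Finset.mem_insert, Finset.mem_singleton]; tauto

lemma triple_perm3 {α : Type*} [DecidableEq α] (x y z : α) :
    ({x, y, z} : Finset α) = {y, z, x} := by
  ext t; simp only [Finset.mem_insert, Finset.mem_singleton]; tauto

lemma triple_perm4 {α : Type*} [DecidableEq α] (x y z : α) :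
    ({x, y, z} : Finset α) = {z, x, y} := by
  ext t; simp only [Finset.mem_insert, Finset.mem_singleton]; tauto

end Aux

section Edges

noncomputable def edgeFin (N m : ℕ) [NeZero N] : Finset (Finset (ZMod N)) :=
  Finset.univ.image fun k : ZMod N => {k, k + (m : ZMod N)}

lemma edgeSet_eq (N m : ℕ) [NeZero N] : edgeSet N m = ↑(edgeFin N m) := by
  ext e
  simp [edgeSet, edgeFin, eq_comm]

lemma card_edgeFin (N m : ℕ) [NeZero N] (h2 : (m : ZMod N) + m ≠ 0) :
    (edgeFin N m).card = N := by
  rw [edgeFin, Finset.card_image_of_injective _ ?_, Finset.card_univ, ZMod.card]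
  intro k k' h
  rcases fpair_eq.mp h with ⟨h1, -⟩ | ⟨h1, h3⟩
  · exact h1
  · exact absurd (by linear_combination h3 - h1) h2

lemma card_edgeFin_half (N m : ℕ) [NeZero N] (h0 : (m : ZMod N) ≠ 0)
    (h2 : (m : ZMod N) + m = 0) : (edgeFin N m).card * 2 = N := by
  have key : ∀ a : ZMod N,
      (Finset.univ.filter fun x : ZMod N =>
        ({x, x + (m:ZMod N)} : Finset (ZMod N)) = {a, a + (m:ZMod N)}).card = 2 := by
    intro a
    have hfil : (Finset.univ.filter fun x : ZMod N =>
        ({x, x + (m:ZMod N)} : Finset (ZMod N)) = {a, a + (m:ZMod N)})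
        = {a, a + (m:ZMod N)} := by
      ext x
      simp only [Finset.mem_filter, Finset.mem_univ, true_and, Finset.mem_insert,
        Finset.mem_singleton]
      constructor
      · intro h
        rcases fpair_eq.mp h with ⟨h1, -⟩ | ⟨h1, -⟩
        · exact Or.inl h1
        · exact Or.inr h1
      · rintro (rfl | rfl)
        · rfl
        · exact fpair_eq.mpr (Or.inr ⟨rfl, by linear_combination h2⟩)
    rw [hfil]
    have hne : a ∉ ({a + (m:ZMod N)} : Finset (ZMod N)) := by
      simp only [Finset.mem_singleton]
      exact fun hh => h0 (by linear_combination -hh)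
    rw [Finset.card_insert_of_notMem hne, Finset.card_singleton]
  have h := card_image_mul_fiber
    (fun k : ZMod N => ({k, k + (m:ZMod N)} : Finset (ZMod N))) 2 key
  rw [ZMod.card] at h
  exact h

lemma edgeFin_disjoint (N m m' : ℕ) [NeZero N] (h : (m : ZMod N) ≠ m')
    (h' : (m : ZMod N) + m' ≠ 0) : Disjoint (edgeFin N m) (edgeFin N m') := by
  rw [Finset.disjoint_left]
  rintro e he he'
  simp only [edgeFin, Finset.mem_image, Finset.mem_univ, true_and] at he he'
  obtain ⟨k, rfl⟩ := he
  obtain ⟨k', hk'⟩ := he'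
  rcases fpair_eq.mp hk' with ⟨rfl, h3⟩ | ⟨h1, h3⟩
  · exact h (by linear_combination -h3)
  · exact h' (by linear_combination h3 - h1)

lemma ncard_union3 {N : ℕ} [NeZero N] (m1 m2 m3 : ℕ)
    (d12 : Disjoint (edgeFin N m1) (edgeFin N m2))
    (d13 : Disjoint (edgeFin N m1) (edgeFin N m3))
    (d23 : Disjoint (edgeFin N m2) (edgeFin N m3)) :
    (edgeSet N m1 ∪ edgeSet N m2 ∪ edgeSet N m3).ncard
      = (edgeFin N m1).card + (edgeFin N m2).card + (edgeFin N m3).card := by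
  rw [edgeSet_eq N m1, edgeSet_eq N m2, edgeSet_eq N m3, ← Finset.coe_union,
    ← Finset.coe_union, Set.ncard_coe_finset,
    Finset.card_union_of_disjoint (Finset.disjoint_union_left.mpr ⟨d13, d23⟩),
    Finset.card_union_of_disjoint d12]

lemma ncard_union2 {N : ℕ} [NeZero N] (m1 m3 : ℕ)
    (d13 : Disjoint (edgeFin N m1) (edgeFin N m3)) :
    (edgeSet N m1 ∪ edgeSet N m3).ncard = (edgeFin N m1).card + (edgeFin N m3).card := by
  rw [edgeSet_eq N m1, edgeSet_eq N m3, ← Finset.coe_union, Set.ncard_coe_finset,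
    Finset.card_union_of_disjoint d13]

end Edges

section Faces

noncomputable def Tfin (N : ℕ) [NeZero N] (a c : ZMod N) : Finset (Finset (ZMod N)) :=
  Finset.univ.image fun k : ZMod N => ({k, k + a, k + c} : Finset (ZMod N))

lemma T_inj {N : ℕ} [NeZero N] (a c : ZMod N) (ha : a ≠ 0) (hc : c ≠ 0) (hac : a ≠ c)
    (h1 : ¬(c = a + a ∧ a + a + a = 0)) (h2 : ¬(a = c + c ∧ c + c + c = 0)) :
    Function.Injective (fun k : ZMod N => ({k, k + a, k + c} : Finset (ZMod N))) := by
  intro k k' h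
  simp only at h
  have hk' : k' ∈ ({k, k + a, k + c} : Finset (ZMod N)) :=
    (Finset.ext_iff.mp h k').mpr (by simp)
  simp only [Finset.mem_insert, Finset.mem_singleton] at hk'
  rcases hk' with rfl | rfl | rfl
  · rfl
  · exfalso
    have hk := (Finset.ext_iff.mp h k).mp (by simp)
    simp only [Finset.mem_insert, Finset.mem_singleton] at hk
    rcases hk with h' | h' | h'
    · exact ha (by linear_combination -h')
    · have haa : a + a = 0 := by linear_combination -h'
      have hkc := (Finset.ext_iff.mp h (k + c)).mp (by simp)
      simp only [Finset.mem_insert, Finset.mem_singleton] at hkc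
      rcases hkc with h'' | h'' | h''
      · exact hac (by linear_combination -h'')
      · exact hc (by linear_combination h'' - h' )
      · exact ha (by linear_combination -h'')
    · have hacz : a + c = 0 := by linear_combination -h'
      have hkc := (Finset.ext_iff.mp h (k + c)).mp (by simp)
      simp only [Finset.mem_insert, Finset.mem_singleton] at hkc
      rcases hkc with h'' | h'' | h''
      · exact hac (by linear_combination -h'')
      · exact h1 ⟨by linear_combination h'', by linear_combination hacz - h''⟩
      · exact ha (by linear_combination -h'')
  · exfalso
    have hk := (Finset.ext_iff.mp h k).mp (by simp)
    simp only [Finset.mem_insert, Finset.mem_singleton] at hk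
    rcases hk with h' | h' | h'
    · exact hc (by linear_combination -h')
    · have hacz : a + c = 0 := by linear_combination -h'
      have hka := (Finset.ext_iff.mp h (k + a)).mp (by simp)
      simp only [Finset.mem_insert, Finset.mem_singleton] at hka
      rcases hka with h'' | h'' | h''
      · exact hac (by linear_combination h'')
      · exact hc (by linear_combination -h'')
      · exact h2 ⟨by linear_combination h'', by linear_combination hacz - h''⟩
    · have hcc : c + c = 0 := by linear_combination -h'
      have hka := (Finset.ext_iff.mp h (k + a)).mp (by simp)
      simp only [Finset.mem_insert, Finset.mem_singleton] at hka
      rcases hka with h'' | h'' | h''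
      · exact hac (by linear_combination h'')
      · exact hc (by linear_combination -h'')
      · exact ha (by linear_combination h'' + hcc)

lemma TI_ne {N : ℕ} [NeZero N] (a c : ZMod N) (ha : a ≠ 0) (hc : c ≠ 0) (hac : a ≠ c)
    (h2a : a + a ≠ 0) (hacs : a + c ≠ 0) (ha2c : a ≠ c + c) (hc2a : c ≠ a + a)
    (k k' : ZMod N) :
    ({k, k + a, k + c} : Finset (ZMod N)) ≠ {k', k' + -a, k' + -c} := by
  intro h
  have hk' : k' ∈ ({k, k + a, k + c} : Finset (ZMod N)) :=
    (Finset.ext_iff.mp h k').mpr (by simp)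
  simp only [Finset.mem_insert, Finset.mem_singleton] at hk'
  rcases hk' with rfl | rfl | rfl
  · have hka := (Finset.ext_iff.mp h (k' + a)).mp (by simp)
    simp only [Finset.mem_insert, Finset.mem_singleton] at hka
    rcases hka with h' | h' | h'
    · exact ha (by linear_combination h')
    · exact h2a (by linear_combination h')
    · exact hacs (by linear_combination h')
  · have hkc := (Finset.ext_iff.mp h (k + c)).mp (by simp)
    simp only [Finset.mem_insert, Finset.mem_singleton] at hkc
    rcases hkc with h' | h' | h'
    · exact hac (by linear_combination -h')
    · exact hc (by linear_combination h')
    · exact ha2c (by linear_combination -h')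
  · have hka := (Finset.ext_iff.mp h (k + a)).mp (by simp)
    simp only [Finset.mem_insert, Finset.mem_singleton] at hka
    rcases hka with h' | h' | h'
    · exact hac (by linear_combination h')
    · exact hc2a (by linear_combination -h')
    · exact ha (by linear_combination h')

lemma Tfin_disjoint {N : ℕ} [NeZero N] (a c : ZMod N) (ha : a ≠ 0) (hc : c ≠ 0)
    (hac : a ≠ c) (h2a : a + a ≠ 0) (hacs : a + c ≠ 0) (ha2c : a ≠ c + c)
    (hc2a : c ≠ a + a) : Disjoint (Tfin N a c) (Tfin N (-a) (-c)) := by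
  rw [Finset.disjoint_left]
  rintro f hf hf'
  simp only [Tfin, Finset.mem_image, Finset.mem_univ, true_and] at hf hf'
  obtain ⟨k, rfl⟩ := hf
  obtain ⟨k', hk'⟩ := hf'
  exact TI_ne a c ha hc hac h2a hacs ha2c hc2a k k' hk'.symm

lemma faceSet_eq_union (N n1 n2 : ℕ) [NeZero N] :
    faceSet N n1 n2 =
      ↑(Tfin N (n1 : ZMod N) ((n1 : ZMod N) + (n2 : ZMod N)) ∪
        Tfin N (-(n1 : ZMod N)) (-((n1 : ZMod N) + (n2 : ZMod N)))) := by
  have harith : ∀ k : ZMod N,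
      ({k, k + -(n1 : ZMod N), k + -((n1 : ZMod N) + (n2 : ZMod N))} : Finset (ZMod N)) =
        {k, k - (n1 : ZMod N), k - (n1 : ZMod N) - (n2 : ZMod N)} := by
    intro k
    rw [show k + -(n1 : ZMod N) = k - (n1 : ZMod N) by ring,
      show k + -((n1 : ZMod N) + (n2 : ZMod N)) = k - (n1 : ZMod N) - (n2 : ZMod N) by ring]
  ext f
  simp only [faceSet, Set.mem_setOf_eq, Finset.coe_union, Set.mem_union, Finset.mem_coe,
    Tfin, Finset.mem_image, Finset.mem_univ, true_and]
  constructor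
  · rintro ⟨k, rfl | rfl⟩
    · exact Or.inl ⟨k, by rw [add_assoc]⟩
    · exact Or.inr ⟨k, harith k⟩
  · rintro (⟨k, rfl⟩ | ⟨k, rfl⟩)
    · exact ⟨k, Or.inl (by rw [add_assoc])⟩
    · exact ⟨k, Or.inr (harith k)⟩

lemma faceSet_eq_Tfin (N n1 n2 : ℕ) [NeZero N]
    (h : ∀ k : ZMod N,
      ({k, k - (n1 : ZMod N), k - (n1 : ZMod N) - (n2 : ZMod N)} : Finset (ZMod N)) ∈
        Tfin N (n1 : ZMod N) ((n1 : ZMod N) + (n2 : ZMod N))) :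
    faceSet N n1 n2 = ↑(Tfin N (n1 : ZMod N) ((n1 : ZMod N) + (n2 : ZMod N))) := by
  ext f
  simp only [faceSet, Set.mem_setOf_eq, Finset.mem_coe]
  constructor
  · rintro ⟨k, rfl | rfl⟩
    · simp only [Tfin, Finset.mem_image, Finset.mem_univ, true_and]
      exact ⟨k, by rw [add_assoc]⟩
    · exact h k
  · intro hf
    simp only [Tfin, Finset.mem_image, Finset.mem_univ, true_and] at hf
    obtain ⟨k, rfl⟩ := hf
    exact ⟨k, Or.inl (by rw [add_assoc])⟩

lemma I_mem_T_of_eq (N n1 : ℕ) [NeZero N] :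
    ∀ k : ZMod N,
      ({k, k - (n1 : ZMod N), k - (n1 : ZMod N) - (n1 : ZMod N)} : Finset (ZMod N)) ∈
        Tfin N (n1 : ZMod N) ((n1 : ZMod N) + (n1 : ZMod N)) := by
  intro k
  set a : ZMod N := (n1 : ZMod N)
  simp only [Tfin, Finset.mem_image, Finset.mem_univ, true_and]
  refine ⟨k - a - a, ?_⟩
  rw [show k - a - a + a = k - a by ring, show k - a - a + (a + a) = k by ring]
  exact triple_perm1 _ _ _

lemma I_mem_T_of_rel (N n1 n2 : ℕ) [NeZero N]
    (hb : (n1 : ZMod N) + (n2 : ZMod N) + (n2 : ZMod N) = 0) :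
    ∀ k : ZMod N,
      ({k, k - (n1 : ZMod N), k - (n1 : ZMod N) - (n2 : ZMod N)} : Finset (ZMod N)) ∈
        Tfin N (n1 : ZMod N) ((n1 : ZMod N) + (n2 : ZMod N)) := by
  intro k
  simp only [Tfin, Finset.mem_image, Finset.mem_univ, true_and]
  refine ⟨k - (n1 : ZMod N), ?_⟩
  rw [show k - (n1 : ZMod N) + (n1 : ZMod N) = k by ring,
    show k - (n1 : ZMod N) + ((n1 : ZMod N) + (n2 : ZMod N)) =
      k - (n1 : ZMod N) - (n2 : ZMod N) by linear_combination hb]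
  exact triple_perm2 _ _ _

lemma card_Tfin_inj {N : ℕ} [NeZero N] (a c : ZMod N)
    (h : Function.Injective (fun k : ZMod N => ({k, k + a, k + c} : Finset (ZMod N)))) :
    (Tfin N a c).card = N := by
  rw [Tfin, Finset.card_image_of_injective _ h, Finset.card_univ, ZMod.card]

lemma card_Tfin_third {N : ℕ} [NeZero N] (a : ZMod N) (ha : a ≠ 0) (h2a : a + a ≠ 0)
    (h3a : a + a + a = 0) : (Tfin N a (a + a)).card * 3 = N := by
  have key : ∀ k : ZMod N,
      (Finset.univ.filter fun x : ZMod N =>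
        ({x, x + a, x + (a + a)} : Finset (ZMod N)) = {k, k + a, k + (a + a)}).card = 3 := by
    intro k
    have hfil : (Finset.univ.filter fun x : ZMod N =>
        ({x, x + a, x + (a + a)} : Finset (ZMod N)) = {k, k + a, k + (a + a)})
        = {k, k + a, k + (a + a)} := by
      ext x
      simp only [Finset.mem_filter, Finset.mem_univ, true_and, Finset.mem_insert,
        Finset.mem_singleton]
      constructor
      · intro h
        have : x ∈ ({k, k + a, k + (a + a)} : Finset (ZMod N)) := h ▸ (by simp)
        simpa using this
      · rintro (rfl | rfl | rfl)
        · rfl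
        · rw [show k + a + a = k + (a + a) by ring,
            show k + a + (a + a) = k by linear_combination h3a]
          exact triple_perm4 _ _ _
        · rw [show k + (a + a) + a = k by linear_combination h3a,
            show k + (a + a) + (a + a) = k + a by linear_combination h3a]
          exact triple_perm3 _ _ _
    rw [hfil]
    rw [Finset.card_insert_of_notMem (by
        simp only [Finset.mem_insert, Finset.mem_singleton]
        push_neg
        exact ⟨fun hh => ha (by linear_combination -hh),
          fun hh => h2a (by linear_combination -hh)⟩),
      Finset.card_insert_of_notMem (by
        simp only [Finset.mem_singleton]
        exact fun hh => ha (by linear_combination -hh)),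
      Finset.card_singleton]
  have h := card_image_mul_fiber
    (fun k : ZMod N => ({k, k + a, k + (a + a)} : Finset (ZMod N))) 3 key
  rw [ZMod.card] at h
  exact h

end Faces
/-- the Euler characteristic `χ = V - E + F` of `C(n1,n2,n3)`
in the six cases (`χ = N/2` is stated as `2χ = N`, and `χ = N/3` as `3χ = N`). -/
theorem stmt_7 (n1 n2 n3 N : ℕ) (h1 : 0 < n1) (h12 : n1 ≤ n2) (h23 : n2 ≤ n3)
    (hN : N = n1 + n2 + n3)
    (E F χ : ℤ)
    (hE : E = (edgeSet N n1 ∪ edgeSet N n2 ∪ edgeSet N n3).ncard)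
    (hF : F = (faceSet N n1 n2).ncard)
    (hχ : χ = (N : ℤ) - E + F) :
    (n1 < n2 ∧ n2 < n3 ∧ n3 ≠ n1 + n2 → χ = 0) ∧
    (n1 < n2 ∧ n2 < n3 ∧ n3 = n1 + n2 → 2 * χ = N) ∧
    (n1 = n2 ∧ n2 < n3 ∧ n3 ≠ n1 + n2 → χ = 0) ∧
    (n1 = n2 ∧ n2 < n3 ∧ n3 = n1 + n2 → 2 * χ = N) ∧
    (n1 < n2 ∧ n2 = n3 → χ = 0) ∧
    (n1 = n2 ∧ n2 = n3 → 3 * χ = N) := by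
  haveI : NeZero N := ⟨by omega⟩
  refine ⟨?_, ?_, ?_, ?_, ?_, ?_⟩
  -- Case 1 : n1 < n2 < n3, n3 ≠ n1 + n2
  · rintro ⟨g12, g23, g3⟩
    have ha : (n1 : ZMod N) ≠ 0 := fun h =>
      cast_ne_zero (N := N) (x := n1) (by omega) (by omega) (by omega) (by push_cast; linear_combination h)
    have hbne : (n2 : ZMod N) ≠ 0 := fun h =>
      cast_ne_zero (N := N) (x := n2) (by omega) (by omega) (by omega) (by push_cast; linear_combination h)
    have e11 : (n1 : ZMod N) + n1 ≠ 0 := fun h =>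
      cast_ne_zero (N := N) (x := n1 + n1) (by omega) (by omega) (by omega) (by push_cast; linear_combination h)
    have e22 : (n2 : ZMod N) + n2 ≠ 0 := fun h =>
      cast_ne_zero (N := N) (x := n2 + n2) (by omega) (by omega) (by omega) (by push_cast; linear_combination h)
    have e33 : (n3 : ZMod N) + n3 ≠ 0 := fun h =>
      cast_ne_zero (N := N) (x := n3 + n3) (by omega) (by omega) (by omega) (by push_cast; linear_combination h)
    have d12a : (n1 : ZMod N) ≠ n2 := cast_inj_ne (by omega) (by omega) (by omega)
    have d12b : (n1 : ZMod N) + n2 ≠ 0 := fun h =>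
      cast_ne_zero (N := N) (x := n1 + n2) (by omega) (by omega) (by omega) (by push_cast; linear_combination h)
    have d13a : (n1 : ZMod N) ≠ n3 := cast_inj_ne (by omega) (by omega) (by omega)
    have d13b : (n1 : ZMod N) + n3 ≠ 0 := fun h =>
      cast_ne_zero (N := N) (x := n1 + n3) (by omega) (by omega) (by omega) (by push_cast; linear_combination h)
    have d23a : (n2 : ZMod N) ≠ n3 := cast_inj_ne (by omega) (by omega) (by omega)
    have d23b : (n2 : ZMod N) + n3 ≠ 0 := fun h =>
      cast_ne_zero (N := N) (x := n2 + n3) (by omega) (by omega) (by omega) (by push_cast; linear_combination h)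
    rw [ncard_union3 n1 n2 n3 (edgeFin_disjoint N n1 n2 d12a d12b)
        (edgeFin_disjoint N n1 n3 d13a d13b) (edgeFin_disjoint N n2 n3 d23a d23b),
      card_edgeFin N n1 e11, card_edgeFin N n2 e22, card_edgeFin N n3 e33] at hE
    -- faces
    have hc : (n1 : ZMod N) + n2 ≠ 0 := d12b
    have hac : (n1 : ZMod N) ≠ (n1 : ZMod N) + n2 := fun h => hbne (by linear_combination -h)
    have hc2a : (n1 : ZMod N) + n2 ≠ (n1 : ZMod N) + n1 := fun h => d12a (by linear_combination -h)
    have ha2c : (n1 : ZMod N) ≠ ((n1 : ZMod N) + n2) + ((n1 : ZMod N) + n2) := fun h =>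
      cast_ne_zero (N := N) (x := n1 + 2 * n2) (by omega) (by omega) (by omega)
        (by push_cast; linear_combination -h)
    have hacs : (n1 : ZMod N) + ((n1 : ZMod N) + n2) ≠ 0 := fun h =>
      cast_ne_zero (N := N) (x := n1 + n1 + n2) (by omega) (by omega) (by omega)
        (by push_cast; linear_combination h)
    have hTinj := T_inj (N := N) (n1 : ZMod N) ((n1 : ZMod N) + n2) ha hc hac
      (fun x => hc2a x.1) (fun x => ha2c x.1)
    have hIinj := T_inj (N := N) (-(n1 : ZMod N)) (-((n1 : ZMod N) + n2))
      (neg_ne_zero.mpr ha) (neg_ne_zero.mpr hc) (fun h => hac (neg_inj.mp h))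
      (fun x => hc2a (by linear_combination -x.1)) (fun x => ha2c (by linear_combination -x.1))
    rw [faceSet_eq_union N n1 n2, Set.ncard_coe_finset,
      Finset.card_union_of_disjoint
        (Tfin_disjoint (n1 : ZMod N) ((n1 : ZMod N) + n2) ha hc hac e11 hacs ha2c hc2a),
      card_Tfin_inj _ _ hTinj, card_Tfin_inj _ _ hIinj] at hF
    omega
  -- Case 2 : n1 < n2 < n3, n3 = n1 + n2
  · rintro ⟨g12, g23, g3⟩
    have ha : (n1 : ZMod N) ≠ 0 := fun h =>
      cast_ne_zero (N := N) (x := n1) (by omega) (by omega) (by omega) (by push_cast; linear_combination h)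
    have hbne : (n2 : ZMod N) ≠ 0 := fun h =>
      cast_ne_zero (N := N) (x := n2) (by omega) (by omega) (by omega) (by push_cast; linear_combination h)
    have hc3 : (n3 : ZMod N) ≠ 0 := fun h =>
      cast_ne_zero (N := N) (x := n3) (by omega) (by omega) (by omega) (by push_cast; linear_combination h)
    have e11 : (n1 : ZMod N) + n1 ≠ 0 := fun h =>
      cast_ne_zero (N := N) (x := n1 + n1) (by omega) (by omega) (by omega) (by push_cast; linear_combination h)
    have e22 : (n2 : ZMod N) + n2 ≠ 0 := fun h =>
      cast_ne_zero (N := N) (x := n2 + n2) (by omega) (by omega) (by omega) (by push_cast; linear_combination h)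
    have e33 : (n3 : ZMod N) + n3 = 0 := by
      have : ((n3 + n3 : ℕ) : ZMod N) = 0 := by
        rw [show n3 + n3 = N by omega]; exact ZMod.natCast_self N
      push_cast at this; exact this
    have d12a : (n1 : ZMod N) ≠ n2 := cast_inj_ne (by omega) (by omega) (by omega)
    have d12b : (n1 : ZMod N) + n2 ≠ 0 := fun h =>
      cast_ne_zero (N := N) (x := n1 + n2) (by omega) (by omega) (by omega) (by push_cast; linear_combination h)
    have d13a : (n1 : ZMod N) ≠ n3 := cast_inj_ne (by omega) (by omega) (by omega)
    have d13b : (n1 : ZMod N) + n3 ≠ 0 := fun h =>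
      cast_ne_zero (N := N) (x := n1 + n3) (by omega) (by omega) (by omega) (by push_cast; linear_combination h)
    have d23a : (n2 : ZMod N) ≠ n3 := cast_inj_ne (by omega) (by omega) (by omega)
    have d23b : (n2 : ZMod N) + n3 ≠ 0 := fun h =>
      cast_ne_zero (N := N) (x := n2 + n3) (by omega) (by omega) (by omega) (by push_cast; linear_combination h)
    have h3card := card_edgeFin_half N n3 hc3 e33
    rw [ncard_union3 n1 n2 n3 (edgeFin_disjoint N n1 n2 d12a d12b)
        (edgeFin_disjoint N n1 n3 d13a d13b) (edgeFin_disjoint N n2 n3 d23a d23b),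
      card_edgeFin N n1 e11, card_edgeFin N n2 e22] at hE
    have hc : (n1 : ZMod N) + n2 ≠ 0 := d12b
    have hac : (n1 : ZMod N) ≠ (n1 : ZMod N) + n2 := fun h => hbne (by linear_combination -h)
    have hc2a : (n1 : ZMod N) + n2 ≠ (n1 : ZMod N) + n1 := fun h => d12a (by linear_combination -h)
    have ha2c : (n1 : ZMod N) ≠ ((n1 : ZMod N) + n2) + ((n1 : ZMod N) + n2) := fun h =>
      cast_ne_zero (N := N) (x := n1 + 2 * n2) (by omega) (by omega) (by omega)
        (by push_cast; linear_combination -h)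
    have hacs : (n1 : ZMod N) + ((n1 : ZMod N) + n2) ≠ 0 := fun h =>
      cast_ne_zero (N := N) (x := n1 + n1 + n2) (by omega) (by omega) (by omega)
        (by push_cast; linear_combination h)
    have hTinj := T_inj (N := N) (n1 : ZMod N) ((n1 : ZMod N) + n2) ha hc hac
      (fun x => hc2a x.1) (fun x => ha2c x.1)
    have hIinj := T_inj (N := N) (-(n1 : ZMod N)) (-((n1 : ZMod N) + n2))
      (neg_ne_zero.mpr ha) (neg_ne_zero.mpr hc) (fun h => hac (neg_inj.mp h))
      (fun x => hc2a (by linear_combination -x.1)) (fun x => ha2c (by linear_combination -x.1))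
    rw [faceSet_eq_union N n1 n2, Set.ncard_coe_finset,
      Finset.card_union_of_disjoint
        (Tfin_disjoint (n1 : ZMod N) ((n1 : ZMod N) + n2) ha hc hac e11 hacs ha2c hc2a),
      card_Tfin_inj _ _ hTinj, card_Tfin_inj _ _ hIinj] at hF
    omega
  -- Case 3 : n1 = n2 < n3, n3 ≠ n1 + n2
  · rintro ⟨g12, g23, g3⟩
    subst g12
    rw [Set.union_self] at hE
    have ha : (n1 : ZMod N) ≠ 0 := fun h =>
      cast_ne_zero (N := N) (x := n1) (by omega) (by omega) (by omega) (by push_cast; linear_combination h)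
    have e11 : (n1 : ZMod N) + n1 ≠ 0 := fun h =>
      cast_ne_zero (N := N) (x := n1 + n1) (by omega) (by omega) (by omega) (by push_cast; linear_combination h)
    have e33 : (n3 : ZMod N) + n3 ≠ 0 := fun h =>
      cast_ne_zero (N := N) (x := n3 + n3) (by omega) (by omega) (by omega) (by push_cast; linear_combination h)
    have d13a : (n1 : ZMod N) ≠ n3 := cast_inj_ne (by omega) (by omega) (by omega)
    have d13b : (n1 : ZMod N) + n3 ≠ 0 := fun h =>
      cast_ne_zero (N := N) (x := n1 + n3) (by omega) (by omega) (by omega) (by push_cast; linear_combination h)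
    rw [ncard_union2 n1 n3 (edgeFin_disjoint N n1 n3 d13a d13b),
      card_edgeFin N n1 e11, card_edgeFin N n3 e33] at hE
    have h3a : (n1 : ZMod N) + n1 + n1 ≠ 0 := fun h =>
      cast_ne_zero (N := N) (x := n1 + n1 + n1) (by omega) (by omega) (by omega)
        (by push_cast; linear_combination h)
    have hac : (n1 : ZMod N) ≠ (n1 : ZMod N) + n1 := fun h => ha (by linear_combination -h)
    have hTinj := T_inj (N := N) (n1 : ZMod N) ((n1 : ZMod N) + n1) ha e11 hac
      (fun x => h3a x.2) (fun x => h3a (by linear_combination -x.1))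
    rw [faceSet_eq_Tfin N n1 n1 (I_mem_T_of_eq N n1), Set.ncard_coe_finset,
      card_Tfin_inj _ _ hTinj] at hF
    omega
  -- Case 4 : n1 = n2 < n3, n3 = n1 + n2
  · rintro ⟨g12, g23, g3⟩
    subst g12
    rw [Set.union_self] at hE
    have ha : (n1 : ZMod N) ≠ 0 := fun h =>
      cast_ne_zero (N := N) (x := n1) (by omega) (by omega) (by omega) (by push_cast; linear_combination h)
    have hc3 : (n3 : ZMod N) ≠ 0 := fun h =>
      cast_ne_zero (N := N) (x := n3) (by omega) (by omega) (by omega) (by push_cast; linear_combination h)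
    have e11 : (n1 : ZMod N) + n1 ≠ 0 := fun h =>
      cast_ne_zero (N := N) (x := n1 + n1) (by omega) (by omega) (by omega) (by push_cast; linear_combination h)
    have e33 : (n3 : ZMod N) + n3 = 0 := by
      have : ((n3 + n3 : ℕ) : ZMod N) = 0 := by
        rw [show n3 + n3 = N by omega]; exact ZMod.natCast_self N
      push_cast at this; exact this
    have d13a : (n1 : ZMod N) ≠ n3 := cast_inj_ne (by omega) (by omega) (by omega)
    have d13b : (n1 : ZMod N) + n3 ≠ 0 := fun h =>
      cast_ne_zero (N := N) (x := n1 + n3) (by omega) (by omega) (by omega) (by push_cast; linear_combination h)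
    have h3card := card_edgeFin_half N n3 hc3 e33
    rw [ncard_union2 n1 n3 (edgeFin_disjoint N n1 n3 d13a d13b),
      card_edgeFin N n1 e11] at hE
    have h3a : (n1 : ZMod N) + n1 + n1 ≠ 0 := fun h =>
      cast_ne_zero (N := N) (x := n1 + n1 + n1) (by omega) (by omega) (by omega)
        (by push_cast; linear_combination h)
    have hac : (n1 : ZMod N) ≠ (n1 : ZMod N) + n1 := fun h => ha (by linear_combination -h)
    have hTinj := T_inj (N := N) (n1 : ZMod N) ((n1 : ZMod N) + n1) ha e11 hac
      (fun x => h3a x.2) (fun x => h3a (by linear_combination -x.1))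
    rw [faceSet_eq_Tfin N n1 n1 (I_mem_T_of_eq N n1), Set.ncard_coe_finset,
      card_Tfin_inj _ _ hTinj] at hF
    omega
  -- Case 5 : n1 < n2 = n3
  · rintro ⟨g12, g23⟩
    subst g23
    rw [Set.union_assoc, Set.union_self] at hE
    have ha : (n1 : ZMod N) ≠ 0 := fun h =>
      cast_ne_zero (N := N) (x := n1) (by omega) (by omega) (by omega) (by push_cast; linear_combination h)
    have hbne : (n2 : ZMod N) ≠ 0 := fun h =>
      cast_ne_zero (N := N) (x := n2) (by omega) (by omega) (by omega) (by push_cast; linear_combination h)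
    have e11 : (n1 : ZMod N) + n1 ≠ 0 := fun h =>
      cast_ne_zero (N := N) (x := n1 + n1) (by omega) (by omega) (by omega) (by push_cast; linear_combination h)
    have e22 : (n2 : ZMod N) + n2 ≠ 0 := fun h =>
      cast_ne_zero (N := N) (x := n2 + n2) (by omega) (by omega) (by omega) (by push_cast; linear_combination h)
    have d12a : (n1 : ZMod N) ≠ n2 := cast_inj_ne (by omega) (by omega) (by omega)
    have d12b : (n1 : ZMod N) + n2 ≠ 0 := fun h =>
      cast_ne_zero (N := N) (x := n1 + n2) (by omega) (by omega) (by omega) (by push_cast; linear_combination h)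
    rw [ncard_union2 n1 n2 (edgeFin_disjoint N n1 n2 d12a d12b),
      card_edgeFin N n1 e11, card_edgeFin N n2 e22] at hE
    have hb0 : (n1 : ZMod N) + n2 + n2 = 0 := by
      have : ((n1 + n2 + n2 : ℕ) : ZMod N) = 0 := by
        rw [show n1 + n2 + n2 = N by omega]; exact ZMod.natCast_self N
      push_cast at this; exact this
    have hc : (n1 : ZMod N) + n2 ≠ 0 := d12b
    have hac : (n1 : ZMod N) ≠ (n1 : ZMod N) + n2 := fun h => hbne (by linear_combination -h)
    have h3c : ¬((n1 : ZMod N) + n2) + ((n1 : ZMod N) + n2) + ((n1 : ZMod N) + n2) = 0 :=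
      fun h => cast_ne_zero (N := N) (x := n1 + n2 + (n1 + n2) + (n1 + n2)) (by omega) (by omega)
        (by omega) (by push_cast; linear_combination h)
    have hTinj := T_inj (N := N) (n1 : ZMod N) ((n1 : ZMod N) + n2) ha hc hac
      (fun x => d12a (by linear_combination -x.1)) (fun x => h3c x.2)
    rw [faceSet_eq_Tfin N n1 n2 (I_mem_T_of_rel N n1 n2 hb0), Set.ncard_coe_finset,
      card_Tfin_inj _ _ hTinj] at hF
    omega
  -- Case 6 : n1 = n2 = n3
  · rintro ⟨g12, g23⟩
    subst g12
    subst g23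
    rw [Set.union_self, Set.union_self] at hE
    have ha : (n1 : ZMod N) ≠ 0 := fun h =>
      cast_ne_zero (N := N) (x := n1) (by omega) (by omega) (by omega) (by push_cast; linear_combination h)
    have e11 : (n1 : ZMod N) + n1 ≠ 0 := fun h =>
      cast_ne_zero (N := N) (x := n1 + n1) (by omega) (by omega) (by omega) (by push_cast; linear_combination h)
    rw [edgeSet_eq N n1, Set.ncard_coe_finset, card_edgeFin N n1 e11] at hE
    have h3a : (n1 : ZMod N) + n1 + n1 = 0 := by
      have : ((n1 + n1 + n1 : ℕ) : ZMod N) = 0 := by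
        rw [show n1 + n1 + n1 = N by omega]; exact ZMod.natCast_self N
      push_cast at this; exact this
    have h3card := card_Tfin_third (N := N) (n1 : ZMod N) ha e11 h3a
    rw [faceSet_eq_Tfin N n1 n1 (I_mem_T_of_eq N n1), Set.ncard_coe_finset] at hF
    omega
end

section
/- Let n1 ≤ n2 ≤ n3 and d be positive integers, with N = n1 + n2 + n3. Then the map sending a pair (j, S), where j ∈ Fin d and S is a face of C(n1,n2,n3) in ZMod N, to the subset { d·x + j : x ∈ S } of ZMod (dN) (where d·x denotes the image of x under the well-defined multiplication-by-d map ZMod N → ZMod (dN)) is a bijection onto the set of faces of C(d·n1, d·n2, d·n3) in ZMod (dN). In particular, C(d·n1, d·n2, d·n3) is the disjoint union of d copies of C(n1,n2,n3). -/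
/-- The multiplication-by-`d` map `ZMod N → ZMod (d*N)` followed by translation by `j`. -/
def fmap (d N j : ℕ) (x : ZMod N) : ZMod (d * N) :=
  ((d * x.val + j : ℕ) : ZMod (d * N))

lemma fmap_add (d N j : ℕ) [NeZero N] (x : ZMod N) (a : ℕ) :
    fmap d N j (x + (a : ZMod N)) = fmap d N j x + ((d * a : ℕ) : ZMod (d * N)) := by
  have h1 : (x + (a : ZMod N)).val ≡ x.val + a [MOD N] := by
    have h : (((x + (a : ZMod N)).val : ℕ) : ZMod N) = ((x.val + a : ℕ) : ZMod N) := by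
      push_cast
      simp [ZMod.natCast_val, ZMod.cast_id]
    exact (ZMod.natCast_eq_natCast_iff _ _ _).mp h
  have h2 : d * (x + (a : ZMod N)).val + j ≡ d * x.val + j + d * a [MOD d * N] := by
    have h3 := (h1.mul_left' (c := d)).add_right j
    have e : d * (x.val + a) + j = d * x.val + j + d * a := by ring
    rwa [e] at h3
  have h4 := (ZMod.natCast_eq_natCast_iff _ _ _).mpr h2
  show ((d * (x + (a : ZMod N)).val + j : ℕ) : ZMod (d * N)) = _
  rw [h4, Nat.cast_add]
  rfl

lemma fmap_sub (d N j : ℕ) [NeZero N] (x : ZMod N) (a : ℕ) :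
    fmap d N j (x - (a : ZMod N)) = fmap d N j x - ((d * a : ℕ) : ZMod (d * N)) := by
  have h := fmap_add d N j (x - (a : ZMod N)) a
  rw [sub_add_cancel] at h
  rw [eq_sub_iff_add_eq, ← h]

lemma fmap_inj (d N j : ℕ) (hd : 0 < d) [NeZero N] :
    Function.Injective (fmap d N j) := by
  intro x y h
  have h1 : d * x.val + j ≡ d * y.val + j [MOD d * N] :=
    (ZMod.natCast_eq_natCast_iff _ _ _).mp h
  have h2 : d * x.val ≡ d * y.val [MOD d * N] := h1.add_right_cancel' j
  have h3 : x.val ≡ y.val [MOD N] := h2.mul_left_cancel' hd.ne'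
  have hx := ZMod.val_lt x
  have hy := ZMod.val_lt y
  have hv : x.val = y.val := by
    rwa [Nat.ModEq, Nat.mod_eq_of_lt hx, Nat.mod_eq_of_lt hy] at h3
  have := congrArg (Nat.cast : ℕ → ZMod N) hv
  rwa [ZMod.natCast_val, ZMod.natCast_val, ZMod.cast_id, ZMod.cast_id] at this

lemma fmap_image_tri (d N j a b : ℕ) [NeZero N] (k : ZMod N) :
    Finset.image (fmap d N j) {k, k + (a : ZMod N), k + (a : ZMod N) + (b : ZMod N)} =
      {fmap d N j k, fmap d N j k + ((d * a : ℕ) : ZMod (d * N)),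
        fmap d N j k + ((d * a : ℕ) : ZMod (d * N)) + ((d * b : ℕ) : ZMod (d * N))} := by
  simp [Finset.image_insert, fmap_add]

lemma fmap_image_tri' (d N j a b : ℕ) [NeZero N] (k : ZMod N) :
    Finset.image (fmap d N j) {k, k - (a : ZMod N), k - (a : ZMod N) - (b : ZMod N)} =
      {fmap d N j k, fmap d N j k - ((d * a : ℕ) : ZMod (d * N)),
        fmap d N j k - ((d * a : ℕ) : ZMod (d * N)) - ((d * b : ℕ) : ZMod (d * N))} := by
  simp [Finset.image_insert, fmap_sub]

lemma fmap_surj_val (d N : ℕ) (hd : 0 < d) [NeZero N] (k : ZMod (d * N)) :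
    fmap d N (k.val % d) ((k.val / d : ℕ) : ZMod N) = k := by
  have hmod : ((k.val / d : ℕ) : ZMod N).val ≡ k.val / d [MOD N] := by
    rw [ZMod.val_natCast]; exact Nat.mod_modEq _ N
  have h1 : d * ((k.val / d : ℕ) : ZMod N).val + k.val % d ≡ k.val [MOD d * N] := by
    have h2 := (hmod.mul_left' (c := d)).add_right (k.val % d)
    have e : d * (k.val / d) + k.val % d = k.val := Nat.div_add_mod k.val d
    rwa [e] at h2
  have h3 := (ZMod.natCast_eq_natCast_iff _ _ _).mpr h1
  haveI : NeZero (d * N) := ⟨Nat.mul_ne_zero hd.ne' (NeZero.ne N)⟩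
  rw [fmap, h3, ZMod.natCast_val, ZMod.cast_id]

/-- the map `(j, S) ↦ {d·x + j : x ∈ S}` is a bijection from
`Fin d × (faces of C(n1,n2,n3))` onto the faces of `C(d·n1, d·n2, d·n3)`.
In particular `C(d·n1,d·n2,d·n3)` is the disjoint union of `d` copies of
`C(n1,n2,n3)`. -/
theorem stmt_10 (n1 n2 n3 d N : ℕ) (h1 : 0 < n1) (h12 : n1 ≤ n2) (h23 : n2 ≤ n3)
    (hd : 0 < d) (hN : N = n1 + n2 + n3) :
    Set.BijOn
      (fun p : Fin d × Finset (ZMod N) =>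
        p.2.image (fun x : ZMod N => ((d * x.val + p.1.val : ℕ) : ZMod (d * N))))
      (Set.univ ×ˢ faceSet N n1 n2)
      (faceSet (d * N) (d * n1) (d * n2)) := by
  haveI : NeZero N := ⟨by omega⟩
  refine ⟨?_, ?_, ?_⟩
  · -- MapsTo
    rintro ⟨j, S⟩ ⟨-, k, hk | hk⟩
    · show Finset.image (fmap d N j.val) S ∈ faceSet (d * N) (d * n1) (d * n2)
      rw [show S = _ from hk, fmap_image_tri]
      exact ⟨fmap d N j.val k, Or.inl rfl⟩
    · show Finset.image (fmap d N j.val) S ∈ faceSet (d * N) (d * n1) (d * n2)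
      rw [show S = _ from hk, fmap_image_tri']
      exact ⟨fmap d N j.val k, Or.inr rfl⟩
  · -- InjOn
    rintro ⟨j, S⟩ ⟨-, hS⟩ ⟨j', S'⟩ ⟨-, hS'⟩ heq
    replace heq : Finset.image (fmap d N j.val) S = Finset.image (fmap d N j'.val) S' := heq
    replace hS : S ∈ faceSet N n1 n2 := hS
    obtain ⟨k, hk⟩ := hS
    have hkS : k ∈ S := by rcases hk with hk | hk <;> rw [hk] <;> simp
    have hmem : fmap d N j.val k ∈ S'.image (fmap d N j'.val) := by
      rw [← heq]; exact Finset.mem_image_of_mem _ hkS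
    obtain ⟨y, -, hy⟩ := Finset.mem_image.mp hmem
    have hme : d * y.val + j'.val ≡ d * k.val + j.val [MOD d * N] :=
      (ZMod.natCast_eq_natCast_iff _ _ _).mp hy
    have hme2 : d * y.val + j'.val ≡ d * k.val + j.val [MOD d] := hme.of_mul_right N
    have hj : j'.val % d = j.val % d := by
      have a1 : (d * y.val + j'.val) % d = j'.val % d := Nat.mul_add_mod d y.val j'.val
      have a2 : (d * k.val + j.val) % d = j.val % d := Nat.mul_add_mod d k.val j.val
      rw [Nat.ModEq, a1, a2] at hme2
      exact hme2
    have hjj : j = j' := by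
      rw [Nat.mod_eq_of_lt j'.isLt, Nat.mod_eq_of_lt j.isLt] at hj
      exact Fin.ext hj.symm
    subst hjj
    have hSS : S = S' := Finset.image_injective (fmap_inj d N j.val hd) heq
    rw [hSS]
  · -- SurjOn
    rintro f ⟨k, hk | hk⟩
    · refine ⟨⟨⟨k.val % d, Nat.mod_lt _ hd⟩, {((k.val / d : ℕ) : ZMod N),
        ((k.val / d : ℕ) : ZMod N) + (n1 : ZMod N),
        ((k.val / d : ℕ) : ZMod N) + (n1 : ZMod N) + (n2 : ZMod N)}⟩,
        ⟨trivial, ⟨((k.val / d : ℕ) : ZMod N), Or.inl rfl⟩⟩, ?_⟩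
      show Finset.image (fmap d N (k.val % d)) _ = f
      rw [fmap_image_tri, fmap_surj_val d N hd k, hk]
    · refine ⟨⟨⟨k.val % d, Nat.mod_lt _ hd⟩, {((k.val / d : ℕ) : ZMod N),
        ((k.val / d : ℕ) : ZMod N) - (n1 : ZMod N),
        ((k.val / d : ℕ) : ZMod N) - (n1 : ZMod N) - (n2 : ZMod N)}⟩,
        ⟨trivial, ⟨((k.val / d : ℕ) : ZMod N), Or.inr rfl⟩⟩, ?_⟩
      show Finset.image (fmap d N (k.val % d)) _ = f
      rw [fmap_image_tri', fmap_surj_val d N hd k, hk]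
end

section
/- Let n1 ≤ n2 ≤ n3 be positive integers with N = n1 + n2 + n3 and 2·n3 = N. Then for every a ∈ ZMod N, the number of faces of C(n1,n2,n3) containing the edge {a, a+n3} is exactly 2 if n1 = n2, and exactly 4 if n1 ≠ n2. -/
lemma ne_face {α : Type*} [DecidableEq α] {a b c d : α}
    (h1 : c ≠ a) (h2 : c ≠ b) (h3 : c ≠ d) :
    ({a, b, c} : Finset α) ≠ {a, b, d} := by
  intro h
  have hc : c ∈ ({a, b, d} : Finset α) := by rw [← h]; simp
  simp only [Finset.mem_insert, Finset.mem_singleton] at hc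
  rcases hc with h' | h' | h'
  exacts [h1 h', h2 h', h3 h']

lemma tonnetz_faces {R : Type*} [CommRing R] [DecidableEq R] (x1 x2 x3 a : R)
    (h3 : x3 = x1 + x2) (htt : x3 + x3 = 0)
    (h10 : x1 ≠ 0) (h20 : x2 ≠ 0) (h30 : x3 ≠ 0) :
    {f : Finset R | (∃ k : R, f = {k, k + x1, k + x1 + x2} ∨ f = {k, k - x1, k - x1 - x2}) ∧
        ({a, a + x3} : Finset R) ⊆ f} =
      {{a, a + x3, a + x1}, {a, a + x3, a - x2}, {a, a + x3, a - x1}, {a, a + x3, a + x2}} := by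
  ext f
  simp only [Set.mem_setOf_eq, Set.mem_insert_iff, Set.mem_singleton_iff]
  constructor
  · rintro ⟨⟨k, rfl | rfl⟩, hsub⟩
    · rw [Finset.insert_subset_iff, Finset.singleton_subset_iff] at hsub
      obtain ⟨ha, hb⟩ := hsub
      simp only [Finset.mem_insert, Finset.mem_singleton] at ha hb
      rcases ha with h | h | h
      · rcases hb with h' | h' | h'
        · exact absurd (show x3 = 0 by linear_combination h' - h) h30
        · exact absurd (show x2 = 0 by linear_combination h' - h - h3) h20
        · subst h
          left
          rw [show a + x1 + x2 = a + x3 by linear_combination -h3]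
          ext y
          simp only [Finset.mem_insert, Finset.mem_singleton]
          tauto
      · rcases hb with h' | h' | h'
        · exact absurd (show x2 = 0 by linear_combination h - h' - h3 + htt) h20
        · exact absurd (show x3 = 0 by linear_combination h' - h) h30
        · exact absurd (show x1 = 0 by linear_combination h' - h - h3) h10
      · rcases hb with h' | h' | h'
        · subst h'
          right; left
          rw [show a + x3 + x1 + x2 = a by linear_combination htt - h3,
            show a + x3 + x1 = a - x2 by linear_combination htt - h3]
          ext y
          simp only [Finset.mem_insert, Finset.mem_singleton]
          tauto
        · exact absurd (show x1 = 0 by linear_combination h - h' - h3 + htt) h10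
        · exact absurd (show x3 = 0 by linear_combination h' - h) h30
    · rw [Finset.insert_subset_iff, Finset.singleton_subset_iff] at hsub
      obtain ⟨ha, hb⟩ := hsub
      simp only [Finset.mem_insert, Finset.mem_singleton] at ha hb
      rcases ha with h | h | h
      · rcases hb with h' | h' | h'
        · exact absurd (show x3 = 0 by linear_combination h' - h) h30
        · exact absurd (show x2 = 0 by linear_combination h - h' - h3 + htt) h20
        · subst h
          right; right; left
          rw [show a - x1 - x2 = a + x3 by linear_combination h3 - htt]
          ext y
          simp only [Finset.mem_insert, Finset.mem_singleton]
          tauto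
      · rcases hb with h' | h' | h'
        · exact absurd (show x2 = 0 by linear_combination h' - h - h3) h20
        · exact absurd (show x3 = 0 by linear_combination h' - h) h30
        · exact absurd (show x1 = 0 by linear_combination h - h' - h3 + htt) h10
      · rcases hb with h' | h' | h'
        · subst h'
          right; right; right
          rw [show a + x3 - x1 - x2 = a by linear_combination h3,
            show a + x3 - x1 = a + x2 by linear_combination h3]
          ext y
          simp only [Finset.mem_insert, Finset.mem_singleton]
          tauto
        · exact absurd (show x1 = 0 by linear_combination h' - h - h3) h10
        · exact absurd (show x3 = 0 by linear_combination h' - h) h30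
  · rintro (rfl | rfl | rfl | rfl)
    · refine ⟨⟨a, Or.inl ?_⟩, ?_⟩
      · rw [show a + x1 + x2 = a + x3 by linear_combination -h3]
        ext y
        simp only [Finset.mem_insert, Finset.mem_singleton]
        tauto
      · intro y hy
        simp only [Finset.mem_insert, Finset.mem_singleton] at hy ⊢
        tauto
    · refine ⟨⟨a + x3, Or.inl ?_⟩, ?_⟩
      · rw [show a + x3 + x1 + x2 = a by linear_combination htt - h3,
          show a + x3 + x1 = a - x2 by linear_combination htt - h3]
        ext y
        simp only [Finset.mem_insert, Finset.mem_singleton]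
        tauto
      · intro y hy
        simp only [Finset.mem_insert, Finset.mem_singleton] at hy ⊢
        tauto
    · refine ⟨⟨a, Or.inr ?_⟩, ?_⟩
      · rw [show a - x1 - x2 = a + x3 by linear_combination h3 - htt]
        ext y
        simp only [Finset.mem_insert, Finset.mem_singleton]
        tauto
      · intro y hy
        simp only [Finset.mem_insert, Finset.mem_singleton] at hy ⊢
        tauto
    · refine ⟨⟨a + x3, Or.inr ?_⟩, ?_⟩
      · rw [show a + x3 - x1 - x2 = a by linear_combination h3,
          show a + x3 - x1 = a + x2 by linear_combination h3]
        ext y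
        simp only [Finset.mem_insert, Finset.mem_singleton]
        tauto
      · intro y hy
        simp only [Finset.mem_insert, Finset.mem_singleton] at hy ⊢
        tauto

/-- if `2·n3 = N`, then every tritone edge `{a, a + n3}` is
contained in exactly two faces if `n1 = n2`, and exactly four if `n1 ≠ n2`. -/
theorem stmt_12 (n1 n2 n3 N : ℕ)
    (h1 : 0 < n1) (h12 : n1 ≤ n2) (h23 : n2 ≤ n3) (hN : N = n1 + n2 + n3)
    (h3 : 2 * n3 = N) :
    ∀ a : ZMod N,
      {f | f ∈ faceSet N n1 n2 ∧
          ({a, a + (n3 : ZMod N)} : Finset (ZMod N)) ⊆ f}.ncard =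
        if n1 = n2 then 2 else 4 := by
  intro a
  have hn3 : n3 = n1 + n2 := by omega
  have hne : ∀ m : ℕ, 0 < m → m < N → (m : ZMod N) ≠ 0 := by
    intro m hm hmN hc
    rw [ZMod.natCast_eq_zero_iff] at hc
    exact absurd (Nat.le_of_dvd hm hc) (by omega)
  have h10 : (n1 : ZMod N) ≠ 0 := hne n1 h1 (by omega)
  have h20 : (n2 : ZMod N) ≠ 0 := hne n2 (by omega) (by omega)
  have h30 : (n3 : ZMod N) ≠ 0 := hne n3 (by omega) (by omega)
  have h3' : (n3 : ZMod N) = (n1 : ZMod N) + (n2 : ZMod N) := by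
    rw [hn3]; push_cast; ring
  have htt : (n3 : ZMod N) + (n3 : ZMod N) = 0 := by
    have e : ((n3 + n3 : ℕ) : ZMod N) = ((N : ℕ) : ZMod N) := by
      rw [show n3 + n3 = N by omega]
    rw [ZMod.natCast_self] at e
    push_cast at e
    exact e
  have h11 : (n1 : ZMod N) + (n1 : ZMod N) ≠ 0 := by
    have := hne (n1 + n1) (by omega) (by omega)
    push_cast at this
    exact this
  have h22 : (n2 : ZMod N) + (n2 : ZMod N) ≠ 0 := by
    have := hne (n2 + n2) (by omega) (by omega)
    push_cast at this
    exact this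
  have hEq : {f | f ∈ faceSet N n1 n2 ∧
        ({a, a + (n3 : ZMod N)} : Finset (ZMod N)) ⊆ f} =
      {{a, a + (n3 : ZMod N), a + (n1 : ZMod N)},
        {a, a + (n3 : ZMod N), a - (n2 : ZMod N)},
        {a, a + (n3 : ZMod N), a - (n1 : ZMod N)},
        {a, a + (n3 : ZMod N), a + (n2 : ZMod N)}} :=
    tonnetz_faces (n1 : ZMod N) (n2 : ZMod N) (n3 : ZMod N) a h3' htt h10 h20 h30
  rw [hEq]
  by_cases hc : n1 = n2
  · rw [if_pos hc]
    subst hc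
    have hcollapse : ({{a, a + (n3 : ZMod N), a + (n1 : ZMod N)},
          {a, a + (n3 : ZMod N), a - (n1 : ZMod N)},
          {a, a + (n3 : ZMod N), a - (n1 : ZMod N)},
          {a, a + (n3 : ZMod N), a + (n1 : ZMod N)}} : Set (Finset (ZMod N))) =
        {{a, a + (n3 : ZMod N), a + (n1 : ZMod N)},
          {a, a + (n3 : ZMod N), a - (n1 : ZMod N)}} := by
      ext y
      simp only [Set.mem_insert_iff, Set.mem_singleton_iff]
      tauto
    rw [hcollapse]
    refine Set.ncard_pair (ne_face ?_ ?_ ?_)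
    · intro h; exact h10 (by linear_combination h)
    · intro h; exact h20 (by linear_combination -h - h3')
    · intro h; exact h11 (by linear_combination h)
  · rw [if_neg hc]
    have hx12 : (n1 : ZMod N) ≠ (n2 : ZMod N) := by
      intro h
      have hz := hne (n2 - n1) (by omega) (by omega)
      apply hz
      rw [Nat.cast_sub h12, ← h, sub_self]
    have ne12 : ({a, a + (n3 : ZMod N), a + (n1 : ZMod N)} : Finset (ZMod N)) ≠
        {a, a + (n3 : ZMod N), a - (n2 : ZMod N)} := by
      refine ne_face ?_ ?_ ?_
      · intro h; exact h10 (by linear_combination h)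
      · intro h; exact h20 (by linear_combination -h - h3')
      · intro h; exact h30 (by linear_combination h + h3')
    have ne13 : ({a, a + (n3 : ZMod N), a + (n1 : ZMod N)} : Finset (ZMod N)) ≠
        {a, a + (n3 : ZMod N), a - (n1 : ZMod N)} := by
      refine ne_face ?_ ?_ ?_
      · intro h; exact h10 (by linear_combination h)
      · intro h; exact h20 (by linear_combination -h - h3')
      · intro h; exact h11 (by linear_combination h)
    have ne14 : ({a, a + (n3 : ZMod N), a + (n1 : ZMod N)} : Finset (ZMod N)) ≠
        {a, a + (n3 : ZMod N), a + (n2 : ZMod N)} := by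
      refine ne_face ?_ ?_ ?_
      · intro h; exact h10 (by linear_combination h)
      · intro h; exact h20 (by linear_combination -h - h3')
      · intro h; exact hx12 (by linear_combination h)
    have ne23 : ({a, a + (n3 : ZMod N), a - (n2 : ZMod N)} : Finset (ZMod N)) ≠
        {a, a + (n3 : ZMod N), a - (n1 : ZMod N)} := by
      refine ne_face ?_ ?_ ?_
      · intro h; exact h20 (by linear_combination -h)
      · intro h; exact h10 (by linear_combination h - h3' + htt)
      · intro h; exact hx12 (by linear_combination h)
    have ne24 : ({a, a + (n3 : ZMod N), a - (n2 : ZMod N)} : Finset (ZMod N)) ≠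
        {a, a + (n3 : ZMod N), a + (n2 : ZMod N)} := by
      refine ne_face ?_ ?_ ?_
      · intro h; exact h20 (by linear_combination -h)
      · intro h; exact h10 (by linear_combination h - h3' + htt)
      · intro h; exact h22 (by linear_combination -h)
    have ne34 : ({a, a + (n3 : ZMod N), a - (n1 : ZMod N)} : Finset (ZMod N)) ≠
        {a, a + (n3 : ZMod N), a + (n2 : ZMod N)} := by
      refine ne_face ?_ ?_ ?_
      · intro h; exact h10 (by linear_combination -h)
      · intro h; exact h20 (by linear_combination h - h3' + htt)
      · intro h; exact h30 (by linear_combination h3' - h)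
    have hm1 : ({a, a + (n3 : ZMod N), a + (n1 : ZMod N)} : Finset (ZMod N)) ∉
        ({{a, a + (n3 : ZMod N), a - (n2 : ZMod N)},
          {a, a + (n3 : ZMod N), a - (n1 : ZMod N)},
          {a, a + (n3 : ZMod N), a + (n2 : ZMod N)}} : Set (Finset (ZMod N))) := by
      simp only [Set.mem_insert_iff, Set.mem_singleton_iff]
      push_neg
      exact ⟨ne12, ne13, ne14⟩
    have hm2 : ({a, a + (n3 : ZMod N), a - (n2 : ZMod N)} : Finset (ZMod N)) ∉
        ({{a, a + (n3 : ZMod N), a - (n1 : ZMod N)},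
          {a, a + (n3 : ZMod N), a + (n2 : ZMod N)}} : Set (Finset (ZMod N))) := by
      simp only [Set.mem_insert_iff, Set.mem_singleton_iff]
      push_neg
      exact ⟨ne23, ne24⟩
    rw [Set.ncard_insert_of_notMem hm1, Set.ncard_insert_of_notMem hm2,
      Set.ncard_pair ne34]
end

section
/- Let n1 < n2 < n3 be positive integers with N = n1 + n2 + n3 and 2·n3 ≠ N. If F1 and F2 are distinct faces of C(n1,n2,n3) that share an edge (that is, F1 ∩ F2 has exactly two elements), then exactly one of F1, F2 is of Type I (a set of the form {k, k+n1, k+n1+n2} for some k ∈ ZMod N) and the other is of Type II (a set of the form {k, k-n1, k-n1-n2} for some k ∈ ZMod N). -/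
section Aux

variable {R : Type*} [CommRing R]

/-- Core distinctness lemma: among `{0, a, a+b}` with all relevant combinations of
`a, b` nonzero, equal differences force equal pairs. -/
lemma tonnetz_key {a b : R} (ha : a ≠ 0) (hb : b ≠ 0)
    (hba : b - a ≠ 0) (hab : a + b ≠ 0) (h2a : 2*a ≠ 0) (h2b : 2*b ≠ 0)
    (h2ab : 2*a + b ≠ 0) (ha2b : a + 2*b ≠ 0) (h2a2b : 2*a + 2*b ≠ 0)
    {s1 s2 t1 t2 : R}
    (hs1 : s1 = 0 ∨ s1 = a ∨ s1 = a + b) (hs2 : s2 = 0 ∨ s2 = a ∨ s2 = a + b)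
    (ht1 : t1 = 0 ∨ t1 = a ∨ t1 = a + b) (ht2 : t2 = 0 ∨ t2 = a ∨ t2 = a + b)
    (hne : s1 ≠ s2) (heq : s1 - s2 = t1 - t2) : s1 = t1 ∧ s2 = t2 := by
  rcases hs1 with rfl|rfl|rfl <;> rcases hs2 with rfl|rfl|rfl <;>
    rcases ht1 with rfl|rfl|rfl <;> rcases ht2 with rfl|rfl|rfl <;>
    first
    | exact ⟨rfl, rfl⟩
    | exact absurd rfl hne
    | exact absurd (by linear_combination heq) ha
    | exact absurd (by linear_combination -heq) ha
    | exact absurd (by linear_combination heq) hb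
    | exact absurd (by linear_combination -heq) hb
    | exact absurd (by linear_combination heq) hba
    | exact absurd (by linear_combination -heq) hba
    | exact absurd (by linear_combination heq) hab
    | exact absurd (by linear_combination -heq) hab
    | exact absurd (by linear_combination heq) h2a
    | exact absurd (by linear_combination -heq) h2a
    | exact absurd (by linear_combination heq) h2b
    | exact absurd (by linear_combination -heq) h2b
    | exact absurd (by linear_combination heq) h2ab
    | exact absurd (by linear_combination -heq) h2ab
    | exact absurd (by linear_combination heq) ha2b
    | exact absurd (by linear_combination -heq) ha2b
    | exact absurd (by linear_combination heq) h2a2b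
    | exact absurd (by linear_combination -heq) h2a2b

lemma tonnetz_shiftI {a b x k : R} (h : x = k ∨ x = k + a ∨ x = k + a + b) :
    ∃ s, (s = 0 ∨ s = a ∨ s = a + b) ∧ x = k + s := by
  rcases h with rfl|rfl|rfl
  · exact ⟨0, Or.inl rfl, by ring⟩
  · exact ⟨a, Or.inr (Or.inl rfl), rfl⟩
  · exact ⟨a + b, Or.inr (Or.inr rfl), by ring⟩

lemma tonnetz_shiftII {a b x k : R} (h : x = k ∨ x = k - a ∨ x = k - a - b) :
    ∃ s, (s = 0 ∨ s = a ∨ s = a + b) ∧ x = k - s := by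
  rcases h with rfl|rfl|rfl
  · exact ⟨0, Or.inl rfl, by ring⟩
  · exact ⟨a, Or.inr (Or.inl rfl), rfl⟩
  · exact ⟨a + b, Or.inr (Or.inr rfl), by ring⟩

/-- No face can be of both types. -/
lemma tonnetz_notboth [DecidableEq R] {a b : R} (ha : a ≠ 0) (hb : b ≠ 0)
    (hba : b - a ≠ 0) (hab : a + b ≠ 0) (h2a : 2*a ≠ 0) (h2b : 2*b ≠ 0)
    (h2ab : 2*a + b ≠ 0) (ha2b : a + 2*b ≠ 0) (h2a2b : 2*a + 2*b ≠ 0)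
    {k m : R}
    (h : ({k, k + a, k + a + b} : Finset R) = {m, m - a, m - a - b}) : False := by
  have hk : k ∈ ({m, m - a, m - a - b} : Finset R) := h ▸ (by simp)
  have hka : k + a ∈ ({m, m - a, m - a - b} : Finset R) := h ▸ (by simp)
  have hkab : k + a + b ∈ ({m, m - a, m - a - b} : Finset R) := h ▸ (by simp)
  simp only [Finset.mem_insert, Finset.mem_singleton] at hk hka hkab
  obtain ⟨t0, ht0, he0⟩ := tonnetz_shiftII hk
  obtain ⟨t1, ht1, he1⟩ := tonnetz_shiftII hka
  obtain ⟨t2, ht2, he2⟩ := tonnetz_shiftII hkab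
  have K1 := tonnetz_key ha hb hba hab h2a h2b h2ab ha2b h2a2b
    (Or.inr (Or.inl rfl)) (Or.inl rfl) ht0 ht1 ha
    (by linear_combination he1 - he0 : a - 0 = t0 - t1)
  have K2 := tonnetz_key ha hb hba hab h2a h2b h2ab ha2b h2a2b
    (Or.inr (Or.inr rfl)) (Or.inl rfl) ht0 ht2 hab
    (by linear_combination he2 - he0 : a + b - 0 = t0 - t2)
  exact hb (by linear_combination K2.1 - K1.1)

end Aux

/-- A face of Type I: a translate of `{0, n1, n1+n2}` in `ZMod N`. -/
def IsTypeI (N n1 n2 : ℕ) (f : Finset (ZMod N)) : Prop :=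
  ∃ k : ZMod N, f = {k, k + (n1 : ZMod N), k + (n1 : ZMod N) + (n2 : ZMod N)}

/-- A face of Type II: an inversion of `{0, n1, n1+n2}` in `ZMod N`. -/
def IsTypeII (N n1 n2 : ℕ) (f : Finset (ZMod N)) : Prop :=
  ∃ k : ZMod N, f = {k, k - (n1 : ZMod N), k - (n1 : ZMod N) - (n2 : ZMod N)}

/-- if `n1 < n2 < n3`, `2·n3 ≠ N`, and two distinct faces of
`C(n1,n2,n3)` share an edge, then exactly one of them is of Type I and the
other is of Type II. -/
theorem stmt_13 (n1 n2 n3 N : ℕ)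
    (h1 : 0 < n1) (h12 : n1 < n2) (h23 : n2 < n3) (hN : N = n1 + n2 + n3)
    (h3 : 2 * n3 ≠ N)
    (F1 F2 : Finset (ZMod N))
    (hF1 : IsTypeI N n1 n2 F1 ∨ IsTypeII N n1 n2 F1)
    (hF2 : IsTypeI N n1 n2 F2 ∨ IsTypeII N n1 n2 F2)
    (hne : F1 ≠ F2) (hshare : (F1 ∩ F2).card = 2) :
    (IsTypeI N n1 n2 F1 ∧ IsTypeII N n1 n2 F2 ∧
      ¬ IsTypeII N n1 n2 F1 ∧ ¬ IsTypeI N n1 n2 F2) ∨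
    (IsTypeI N n1 n2 F2 ∧ IsTypeII N n1 n2 F1 ∧
      ¬ IsTypeII N n1 n2 F2 ∧ ¬ IsTypeI N n1 n2 F1) := by
  haveI : NeZero N := ⟨by omega⟩
  have hz : ∀ m : ℕ, 0 < m → m < 2*N → m ≠ N → (m : ZMod N) ≠ 0 := by
    intro m hm1 hm2 hm3 h
    rw [ZMod.natCast_eq_zero_iff] at h
    obtain ⟨c, hc⟩ := h
    have : c = 0 ∨ c = 1 ∨ 2 ≤ c := by omega
    rcases this with rfl|rfl|hc2
    · omega
    · omega
    · have : 2*N ≤ N*c := by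
        calc 2*N = N*2 := by ring
        _ ≤ N*c := Nat.mul_le_mul_left N hc2
      omega
  set a := (n1 : ZMod N) with ha_def
  set b := (n2 : ZMod N) with hb_def
  have ha : a ≠ 0 := hz n1 (by omega) (by omega) (by omega)
  have hb : b ≠ 0 := hz n2 (by omega) (by omega) (by omega)
  have hba : b - a ≠ 0 := by
    have := hz (n2 - n1) (by omega) (by omega) (by omega)
    rwa [Nat.cast_sub h12.le] at this
  have hab : a + b ≠ 0 := by
    have := hz (n1 + n2) (by omega) (by omega) (by omega)
    push_cast at this; exact this
  have h2a : 2*a ≠ 0 := by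
    have := hz (2*n1) (by omega) (by omega) (by omega)
    push_cast at this; exact this
  have h2b : 2*b ≠ 0 := by
    have := hz (2*n2) (by omega) (by omega) (by omega)
    push_cast at this; exact this
  have h2ab : 2*a + b ≠ 0 := by
    have := hz (2*n1 + n2) (by omega) (by omega) (by omega)
    push_cast at this; exact this
  have ha2b : a + 2*b ≠ 0 := by
    have := hz (n1 + 2*n2) (by omega) (by omega) (by omega)
    push_cast at this; exact this
  have h2a2b : 2*a + 2*b ≠ 0 := by
    have := hz (2*n1 + 2*n2) (by omega) (by omega) (by omega)
    push_cast at this; exact this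
  simp only [IsTypeI, IsTypeII, ← ha_def, ← hb_def] at hF1 hF2 ⊢
  obtain ⟨x, hx, y, hy, hxy⟩ := Finset.one_lt_card.mp (by omega : 1 < (F1 ∩ F2).card)
  rw [Finset.mem_inter] at hx hy
  obtain ⟨hx1, hx2⟩ := hx
  obtain ⟨hy1, hy2⟩ := hy
  rcases hF1 with ⟨k1, rfl⟩ | ⟨k1, rfl⟩ <;> rcases hF2 with ⟨k2, rfl⟩ | ⟨k2, rfl⟩
  · -- both Type I: contradiction
    exfalso
    simp only [Finset.mem_insert, Finset.mem_singleton] at hx1 hx2 hy1 hy2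
    obtain ⟨s1, hs1, rfl⟩ := tonnetz_shiftI hx1
    obtain ⟨t1, ht1, he1⟩ := tonnetz_shiftI hx2
    obtain ⟨s2, hs2, rfl⟩ := tonnetz_shiftI hy1
    obtain ⟨t2, ht2, he2⟩ := tonnetz_shiftI hy2
    have hne' : s1 ≠ s2 := fun h => hxy (by rw [h])
    obtain ⟨hA, hB⟩ := tonnetz_key ha hb hba hab h2a h2b h2ab ha2b h2a2b
      hs1 hs2 ht1 ht2 hne' (by linear_combination he1 - he2)
    have hk : k1 = k2 := by linear_combination he1 - hA
    exact hne (by rw [hk])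
  · -- F1 Type I, F2 Type II
    refine Or.inl ⟨⟨k1, rfl⟩, ⟨k2, rfl⟩, ?_, ?_⟩
    · rintro ⟨m, hm⟩
      exact tonnetz_notboth ha hb hba hab h2a h2b h2ab ha2b h2a2b hm
    · rintro ⟨m, hm⟩
      exact tonnetz_notboth ha hb hba hab h2a h2b h2ab ha2b h2a2b hm.symm
  · -- F1 Type II, F2 Type I
    refine Or.inr ⟨⟨k2, rfl⟩, ⟨k1, rfl⟩, ?_, ?_⟩
    · rintro ⟨m, hm⟩
      exact tonnetz_notboth ha hb hba hab h2a h2b h2ab ha2b h2a2b hm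
    · rintro ⟨m, hm⟩
      exact tonnetz_notboth ha hb hba hab h2a h2b h2ab ha2b h2a2b hm.symm
  · -- both Type II: contradiction
    exfalso
    simp only [Finset.mem_insert, Finset.mem_singleton] at hx1 hx2 hy1 hy2
    obtain ⟨s1, hs1, rfl⟩ := tonnetz_shiftII hx1
    obtain ⟨t1, ht1, he1⟩ := tonnetz_shiftII hx2
    obtain ⟨s2, hs2, rfl⟩ := tonnetz_shiftII hy1
    obtain ⟨t2, ht2, he2⟩ := tonnetz_shiftII hy2
    have hne' : s2 ≠ s1 := fun h => hxy (by rw [h])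
    obtain ⟨hA, hB⟩ := tonnetz_key ha hb hba hab h2a h2b h2ab ha2b h2a2b
      hs2 hs1 ht2 ht1 hne' (by linear_combination he1 - he2)
    have hk : k1 = k2 := by linear_combination he1 + hB
    exact hne (by rw [hk])
end

section
/- Let n and k be positive integers, and set n0 = n / gcd(n,k) and k0 = k / gcd(n,k). Then gcd(3n+k, n+k) = 2·gcd(n,k) if n0 and k0 are both odd, and gcd(3n+k, n+k) = gcd(n,k) otherwise. -/
/-- for positive integers `n`, `k`, with `n0 = n / gcd(n,k)` and
`k0 = k / gcd(n,k)`, we have `gcd(3n+k, n+k) = 2·gcd(n,k)` if `n0` and `k0`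
are both odd, and `gcd(3n+k, n+k) = gcd(n,k)` otherwise. -/
theorem stmt_16 (n k : ℕ) (hn : 0 < n) (hk : 0 < k)
    (n0 k0 : ℕ) (hn0 : n0 = n / Nat.gcd n k) (hk0 : k0 = k / Nat.gcd n k) :
    Nat.gcd (3 * n + k) (n + k) =
      if Odd n0 ∧ Odd k0 then 2 * Nat.gcd n k else Nat.gcd n k := by
  set d := Nat.gcd n k with hd
  have hdpos : 0 < d := Nat.gcd_pos_of_pos_left k hn
  have hdn : d ∣ n := Nat.gcd_dvd_left n k
  have hdk : d ∣ k := Nat.gcd_dvd_right n k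
  have hn' : n = d * n0 := by rw [hn0]; exact (Nat.mul_div_cancel' hdn).symm
  have hk' : k = d * k0 := by rw [hk0]; exact (Nat.mul_div_cancel' hdk).symm
  have hcop : Nat.Coprime n0 k0 := by
    rw [hn0, hk0]; exact Nat.coprime_div_gcd_div_gcd hdpos
  have key : Nat.gcd (3 * n + k) (n + k) = d * Nat.gcd 2 (n0 + k0) := by
    rw [hn', hk']
    have h1 : 3 * (d * n0) + d * k0 = d * (3 * n0 + k0) := by ring
    have h2 : d * n0 + d * k0 = d * (n0 + k0) := by ring
    rw [h1, h2, Nat.gcd_mul_left]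
    congr 1
    have h3 : 3 * n0 + k0 = 2 * n0 + (n0 + k0) := by ring
    rw [h3, Nat.gcd_comm, Nat.gcd_add_self_right, Nat.gcd_comm]
    have hc : Nat.Coprime n0 (n0 + k0) := by
      simpa using (Nat.coprime_add_self_left (m := n0) (n := k0)).mpr hcop
    exact Nat.Coprime.gcd_mul_right_cancel 2 hc
  by_cases h : Odd n0 ∧ Odd k0
  · have heven : 2 ∣ n0 + k0 := (Odd.add_odd h.1 h.2).two_dvd
    rw [key, Nat.gcd_eq_left heven, if_pos h]
    ring
  · have hodd : ¬ 2 ∣ (n0 + k0) := by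
      rcases Nat.even_or_odd n0 with he | ho
      · have hk0o : Odd k0 := by
          rcases Nat.even_or_odd k0 with hke | hko
          · exfalso
            have : 2 ∣ Nat.gcd n0 k0 := Nat.dvd_gcd he.two_dvd hke.two_dvd
            rw [hcop] at this; omega
          · exact hko
        intro hdvd
        rcases Nat.even_add.mp (even_iff_two_dvd.mpr hdvd) with h'
        exact (Nat.not_even_iff_odd.mpr hk0o) (h'.mp he)
      · have hk0e : Even k0 := by
          rcases Nat.even_or_odd k0 with hke | hko
          · exact hke
          · exact absurd ⟨ho, hko⟩ h
        intro hdvd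
        rcases Nat.even_add.mp (even_iff_two_dvd.mpr hdvd) with h'
        exact (Nat.not_even_iff_odd.mpr ho) (h'.mpr hk0e)
    have : Nat.gcd 2 (n0 + k0) = 1 := by
      have := Nat.coprime_two_left (n := n0 + k0)
      rcases Nat.even_or_odd (n0 + k0) with he | hodd'
      · exact absurd he.two_dvd hodd
      · exact this.mpr hodd'
    rw [key, this, if_neg h, mul_one]
end

section
/- Let n1 < n2 < n3 be positive integers with N = n1 + n2 + n3 and n3 ≠ n1 + n2. Then for every vertex a ∈ ZMod N, the number of faces of C(n1,n2,n3) containing a is exactly 6; namely, they are the six pairwise distinct sets {a, a+n1, a+n1+n2}, {a, a+n1, a+n1+n3}, {a, a+n2, a+n1+n2}, {a, a+n2, a+n2+n3}, {a, a+n3, a+n1+n3}, and {a, a+n3, a+n2+n3}. -/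
section helpers

variable {G : Type*} [DecidableEq G]

lemma tripEq (x y z u v w : G) (e1 : x = u) (e2 : y = v) (e3 : z = w) :
    ({x, y, z} : Finset G) = {u, v, w} := by rw [e1, e2, e3]

lemma trip_rot (x y z : G) : ({x, y, z} : Finset G) = {y, z, x} := by
  ext t; simp only [Finset.mem_insert, Finset.mem_singleton]; tauto

lemma trip_rot2 (x y z : G) : ({x, y, z} : Finset G) = {z, x, y} := by
  ext t; simp only [Finset.mem_insert, Finset.mem_singleton]; tauto

lemma trip_sw12 (x y z : G) : ({x, y, z} : Finset G) = {x, z, y} := by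
  ext t; simp only [Finset.mem_insert, Finset.mem_singleton]; tauto

lemma trip_sw01 (x y z : G) : ({x, y, z} : Finset G) = {y, x, z} := by
  ext t; simp only [Finset.mem_insert, Finset.mem_singleton]; tauto

lemma trip_rev (x y z : G) : ({x, y, z} : Finset G) = {z, y, x} := by
  ext t; simp only [Finset.mem_insert, Finset.mem_singleton]; tauto

lemma ne3 (a p q r s : G) (h0 : q = a → False) (hr : q = r → False) (hs : q = s → False) :
    ({a, p, q} : Finset G) ≠ {a, r, s} := by
  intro h
  have hm : q ∈ ({a, r, s} : Finset G) := by rw [← h]; simp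
  simp only [Finset.mem_insert, Finset.mem_singleton] at hm
  tauto

lemma ne2 (a p q r s : G) (h0 : p = a → False) (hr : p = r → False) (hs : p = s → False) :
    ({a, p, q} : Finset G) ≠ {a, r, s} := by
  intro h
  have hm : p ∈ ({a, r, s} : Finset G) := by rw [← h]; simp
  simp only [Finset.mem_insert, Finset.mem_singleton] at hm
  tauto

end helpers

/-- if `n1 < n2 < n3` and `n3 ≠ n1 + n2`, every vertex `a` lies
in exactly six faces of `C(n1,n2,n3)`, namely the six listed sets. -/
theorem stmt_17 (n1 n2 n3 N : ℕ)
    (h1 : 0 < n1) (h12 : n1 < n2) (h23 : n2 < n3) (hN : N = n1 + n2 + n3)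
    (h3 : n3 ≠ n1 + n2) :
    ∀ a : ZMod N,
      {f | f ∈ faceSet N n1 n2 ∧ a ∈ f} =
        ({ {a, a + (n1 : ZMod N), a + (n1 : ZMod N) + (n2 : ZMod N)},
           {a, a + (n1 : ZMod N), a + (n1 : ZMod N) + (n3 : ZMod N)},
           {a, a + (n2 : ZMod N), a + (n1 : ZMod N) + (n2 : ZMod N)},
           {a, a + (n2 : ZMod N), a + (n2 : ZMod N) + (n3 : ZMod N)},
           {a, a + (n3 : ZMod N), a + (n1 : ZMod N) + (n3 : ZMod N)},
           {a, a + (n3 : ZMod N), a + (n2 : ZMod N) + (n3 : ZMod N)} } :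
          Set (Finset (ZMod N))) ∧
      {f | f ∈ faceSet N n1 n2 ∧ a ∈ f}.ncard = 6 := by
  intro a
  haveI : NeZero N := ⟨by omega⟩
  have hz : (n1 : ZMod N) + (n2 : ZMod N) + (n3 : ZMod N) = 0 := by
    have h0 : ((n1 + n2 + n3 : ℕ) : ZMod N) = 0 := by
      rw [← hN]; exact ZMod.natCast_self N
    push_cast at h0; exact h0
  have key : ∀ x y : ℕ, x < N → y < N → x ≠ y → (x : ZMod N) ≠ (y : ZMod N) := by
    intro x y hx hy hxy h
    apply hxy
    have hv := congrArg ZMod.val h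
    rwa [ZMod.val_natCast_of_lt hx, ZMod.val_natCast_of_lt hy] at hv
  have hset : {f | f ∈ faceSet N n1 n2 ∧ a ∈ f} =
      ({ {a, a + (n1 : ZMod N), a + (n1 : ZMod N) + (n2 : ZMod N)},
         {a, a + (n1 : ZMod N), a + (n1 : ZMod N) + (n3 : ZMod N)},
         {a, a + (n2 : ZMod N), a + (n1 : ZMod N) + (n2 : ZMod N)},
         {a, a + (n2 : ZMod N), a + (n2 : ZMod N) + (n3 : ZMod N)},
         {a, a + (n3 : ZMod N), a + (n1 : ZMod N) + (n3 : ZMod N)},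
         {a, a + (n3 : ZMod N), a + (n2 : ZMod N) + (n3 : ZMod N)} } :
        Set (Finset (ZMod N))) := by
    ext f
    simp only [Set.mem_setOf_eq, Set.mem_insert_iff, Set.mem_singleton_iff, faceSet]
    constructor
    · rintro ⟨⟨k, hk | hk⟩, haf⟩ <;> subst hk <;>
        simp only [Finset.mem_insert, Finset.mem_singleton] at haf
      · rcases haf with h | h | h
        · subst h; exact Or.inl rfl
        · refine Or.inr (Or.inr (Or.inr (Or.inl ?_)))
          rw [trip_rot]
          exact tripEq _ _ _ _ _ _ h.symm (by linear_combination -h)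
            (by linear_combination -h - hz)
        · refine Or.inr (Or.inr (Or.inr (Or.inr (Or.inl ?_))))
          rw [trip_rot2]
          exact tripEq _ _ _ _ _ _ h.symm (by linear_combination -h - hz)
            (by linear_combination -h - hz)
      · rcases haf with h | h | h
        · refine Or.inr (Or.inr (Or.inr (Or.inr (Or.inr ?_))))
          rw [trip_sw12]
          exact tripEq _ _ _ _ _ _ h.symm (by linear_combination -h - hz)
            (by linear_combination -h - hz)
        · refine Or.inr (Or.inl ?_)
          rw [trip_sw01]
          exact tripEq _ _ _ _ _ _ h.symm (by linear_combination -h)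
            (by linear_combination -h - hz)
        · refine Or.inr (Or.inr (Or.inl ?_))
          rw [trip_rev]
          exact tripEq _ _ _ _ _ _ h.symm (by linear_combination -h)
            (by linear_combination -h)
    · rintro (rfl | rfl | rfl | rfl | rfl | rfl)
      · exact ⟨⟨a, Or.inl rfl⟩, by simp⟩
      · refine ⟨⟨a + (n1 : ZMod N), Or.inr ?_⟩, by simp⟩
        rw [trip_sw01]
        exact tripEq _ _ _ _ _ _ rfl (by ring) (by linear_combination hz)
      · refine ⟨⟨a + (n1 : ZMod N) + (n2 : ZMod N), Or.inr ?_⟩, by simp⟩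
        rw [trip_rev]
        exact tripEq _ _ _ _ _ _ rfl (by ring) (by ring)
      · refine ⟨⟨a + (n2 : ZMod N) + (n3 : ZMod N), Or.inl ?_⟩, by simp⟩
        rw [trip_rot2]
        exact tripEq _ _ _ _ _ _ rfl (by linear_combination -hz) (by linear_combination -hz)
      · refine ⟨⟨a + (n3 : ZMod N), Or.inl ?_⟩, by simp⟩
        rw [trip_rot]
        exact tripEq _ _ _ _ _ _ rfl (by ring) (by linear_combination -hz)
      · refine ⟨⟨a, Or.inr ?_⟩, by simp⟩
        rw [trip_sw12]
        exact tripEq _ _ _ _ _ _ rfl (by linear_combination hz) (by linear_combination hz)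
  refine ⟨hset, ?_⟩
  rw [hset]
  -- distinctness of the six faces
  have h12' : ({a, a + (n1:ZMod N), a + (n1:ZMod N) + (n2:ZMod N)} : Finset (ZMod N)) ≠
      {a, a + (n1:ZMod N), a + (n1:ZMod N) + (n3:ZMod N)} :=
    ne3 _ _ _ _ _
      (fun h => key (n1+n2) 0 (by omega) (by omega) (by omega) (by push_cast; linear_combination h))
      (fun h => key (n1+n2) n1 (by omega) (by omega) (by omega) (by push_cast; linear_combination h))
      (fun h => key (n1+n2) (n1+n3) (by omega) (by omega) (by omega) (by push_cast; linear_combination h))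
  have h13' : ({a, a + (n1:ZMod N), a + (n1:ZMod N) + (n2:ZMod N)} : Finset (ZMod N)) ≠
      {a, a + (n2:ZMod N), a + (n1:ZMod N) + (n2:ZMod N)} :=
    ne2 _ _ _ _ _
      (fun h => key n1 0 (by omega) (by omega) (by omega) (by push_cast; linear_combination h))
      (fun h => key n1 n2 (by omega) (by omega) (by omega) (by push_cast; linear_combination h))
      (fun h => key n1 (n1+n2) (by omega) (by omega) (by omega) (by push_cast; linear_combination h))
  have h14' : ({a, a + (n1:ZMod N), a + (n1:ZMod N) + (n2:ZMod N)} : Finset (ZMod N)) ≠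
      {a, a + (n2:ZMod N), a + (n2:ZMod N) + (n3:ZMod N)} :=
    ne2 _ _ _ _ _
      (fun h => key n1 0 (by omega) (by omega) (by omega) (by push_cast; linear_combination h))
      (fun h => key n1 n2 (by omega) (by omega) (by omega) (by push_cast; linear_combination h))
      (fun h => key n1 (n2+n3) (by omega) (by omega) (by omega) (by push_cast; linear_combination h))
  have h15' : ({a, a + (n1:ZMod N), a + (n1:ZMod N) + (n2:ZMod N)} : Finset (ZMod N)) ≠
      {a, a + (n3:ZMod N), a + (n1:ZMod N) + (n3:ZMod N)} :=
    ne2 _ _ _ _ _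
      (fun h => key n1 0 (by omega) (by omega) (by omega) (by push_cast; linear_combination h))
      (fun h => key n1 n3 (by omega) (by omega) (by omega) (by push_cast; linear_combination h))
      (fun h => key n1 (n1+n3) (by omega) (by omega) (by omega) (by push_cast; linear_combination h))
  have h16' : ({a, a + (n1:ZMod N), a + (n1:ZMod N) + (n2:ZMod N)} : Finset (ZMod N)) ≠
      {a, a + (n3:ZMod N), a + (n2:ZMod N) + (n3:ZMod N)} :=
    ne2 _ _ _ _ _
      (fun h => key n1 0 (by omega) (by omega) (by omega) (by push_cast; linear_combination h))
      (fun h => key n1 n3 (by omega) (by omega) (by omega) (by push_cast; linear_combination h))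
      (fun h => key n1 (n2+n3) (by omega) (by omega) (by omega) (by push_cast; linear_combination h))
  have h23' : ({a, a + (n1:ZMod N), a + (n1:ZMod N) + (n3:ZMod N)} : Finset (ZMod N)) ≠
      {a, a + (n2:ZMod N), a + (n1:ZMod N) + (n2:ZMod N)} :=
    ne2 _ _ _ _ _
      (fun h => key n1 0 (by omega) (by omega) (by omega) (by push_cast; linear_combination h))
      (fun h => key n1 n2 (by omega) (by omega) (by omega) (by push_cast; linear_combination h))
      (fun h => key n1 (n1+n2) (by omega) (by omega) (by omega) (by push_cast; linear_combination h))
  have h24' : ({a, a + (n1:ZMod N), a + (n1:ZMod N) + (n3:ZMod N)} : Finset (ZMod N)) ≠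
      {a, a + (n2:ZMod N), a + (n2:ZMod N) + (n3:ZMod N)} :=
    ne2 _ _ _ _ _
      (fun h => key n1 0 (by omega) (by omega) (by omega) (by push_cast; linear_combination h))
      (fun h => key n1 n2 (by omega) (by omega) (by omega) (by push_cast; linear_combination h))
      (fun h => key n1 (n2+n3) (by omega) (by omega) (by omega) (by push_cast; linear_combination h))
  have h25' : ({a, a + (n1:ZMod N), a + (n1:ZMod N) + (n3:ZMod N)} : Finset (ZMod N)) ≠
      {a, a + (n3:ZMod N), a + (n1:ZMod N) + (n3:ZMod N)} :=
    ne2 _ _ _ _ _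
      (fun h => key n1 0 (by omega) (by omega) (by omega) (by push_cast; linear_combination h))
      (fun h => key n1 n3 (by omega) (by omega) (by omega) (by push_cast; linear_combination h))
      (fun h => key n1 (n1+n3) (by omega) (by omega) (by omega) (by push_cast; linear_combination h))
  have h26' : ({a, a + (n1:ZMod N), a + (n1:ZMod N) + (n3:ZMod N)} : Finset (ZMod N)) ≠
      {a, a + (n3:ZMod N), a + (n2:ZMod N) + (n3:ZMod N)} :=
    ne2 _ _ _ _ _
      (fun h => key n1 0 (by omega) (by omega) (by omega) (by push_cast; linear_combination h))
      (fun h => key n1 n3 (by omega) (by omega) (by omega) (by push_cast; linear_combination h))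
      (fun h => key n1 (n2+n3) (by omega) (by omega) (by omega) (by push_cast; linear_combination h))
  have h34' : ({a, a + (n2:ZMod N), a + (n1:ZMod N) + (n2:ZMod N)} : Finset (ZMod N)) ≠
      {a, a + (n2:ZMod N), a + (n2:ZMod N) + (n3:ZMod N)} :=
    ne3 _ _ _ _ _
      (fun h => key (n1+n2) 0 (by omega) (by omega) (by omega) (by push_cast; linear_combination h))
      (fun h => key (n1+n2) n2 (by omega) (by omega) (by omega) (by push_cast; linear_combination h))
      (fun h => key (n1+n2) (n2+n3) (by omega) (by omega) (by omega) (by push_cast; linear_combination h))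
  have h35' : ({a, a + (n2:ZMod N), a + (n1:ZMod N) + (n2:ZMod N)} : Finset (ZMod N)) ≠
      {a, a + (n3:ZMod N), a + (n1:ZMod N) + (n3:ZMod N)} :=
    ne2 _ _ _ _ _
      (fun h => key n2 0 (by omega) (by omega) (by omega) (by push_cast; linear_combination h))
      (fun h => key n2 n3 (by omega) (by omega) (by omega) (by push_cast; linear_combination h))
      (fun h => key n2 (n1+n3) (by omega) (by omega) (by omega) (by push_cast; linear_combination h))
  have h36' : ({a, a + (n2:ZMod N), a + (n1:ZMod N) + (n2:ZMod N)} : Finset (ZMod N)) ≠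
      {a, a + (n3:ZMod N), a + (n2:ZMod N) + (n3:ZMod N)} :=
    ne2 _ _ _ _ _
      (fun h => key n2 0 (by omega) (by omega) (by omega) (by push_cast; linear_combination h))
      (fun h => key n2 n3 (by omega) (by omega) (by omega) (by push_cast; linear_combination h))
      (fun h => key n2 (n2+n3) (by omega) (by omega) (by omega) (by push_cast; linear_combination h))
  have h45' : ({a, a + (n2:ZMod N), a + (n2:ZMod N) + (n3:ZMod N)} : Finset (ZMod N)) ≠
      {a, a + (n3:ZMod N), a + (n1:ZMod N) + (n3:ZMod N)} :=
    ne2 _ _ _ _ _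
      (fun h => key n2 0 (by omega) (by omega) (by omega) (by push_cast; linear_combination h))
      (fun h => key n2 n3 (by omega) (by omega) (by omega) (by push_cast; linear_combination h))
      (fun h => key n2 (n1+n3) (by omega) (by omega) (by omega) (by push_cast; linear_combination h))
  have h46' : ({a, a + (n2:ZMod N), a + (n2:ZMod N) + (n3:ZMod N)} : Finset (ZMod N)) ≠
      {a, a + (n3:ZMod N), a + (n2:ZMod N) + (n3:ZMod N)} :=
    ne2 _ _ _ _ _
      (fun h => key n2 0 (by omega) (by omega) (by omega) (by push_cast; linear_combination h))
      (fun h => key n2 n3 (by omega) (by omega) (by omega) (by push_cast; linear_combination h))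
      (fun h => key n2 (n2+n3) (by omega) (by omega) (by omega) (by push_cast; linear_combination h))
  have h56' : ({a, a + (n3:ZMod N), a + (n1:ZMod N) + (n3:ZMod N)} : Finset (ZMod N)) ≠
      {a, a + (n3:ZMod N), a + (n2:ZMod N) + (n3:ZMod N)} :=
    ne3 _ _ _ _ _
      (fun h => key (n1+n3) 0 (by omega) (by omega) (by omega) (by push_cast; linear_combination h))
      (fun h => key (n1+n3) n3 (by omega) (by omega) (by omega) (by push_cast; linear_combination h))
      (fun h => key (n1+n3) (n2+n3) (by omega) (by omega) (by omega) (by push_cast; linear_combination h))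
  rw [show ({ {a, a + (n1 : ZMod N), a + (n1 : ZMod N) + (n2 : ZMod N)},
           {a, a + (n1 : ZMod N), a + (n1 : ZMod N) + (n3 : ZMod N)},
           {a, a + (n2 : ZMod N), a + (n1 : ZMod N) + (n2 : ZMod N)},
           {a, a + (n2 : ZMod N), a + (n2 : ZMod N) + (n3 : ZMod N)},
           {a, a + (n3 : ZMod N), a + (n1 : ZMod N) + (n3 : ZMod N)},
           {a, a + (n3 : ZMod N), a + (n2 : ZMod N) + (n3 : ZMod N)} } :
          Set (Finset (ZMod N))) =
      (↑({ {a, a + (n1 : ZMod N), a + (n1 : ZMod N) + (n2 : ZMod N)},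
           {a, a + (n1 : ZMod N), a + (n1 : ZMod N) + (n3 : ZMod N)},
           {a, a + (n2 : ZMod N), a + (n1 : ZMod N) + (n2 : ZMod N)},
           {a, a + (n2 : ZMod N), a + (n2 : ZMod N) + (n3 : ZMod N)},
           {a, a + (n3 : ZMod N), a + (n1 : ZMod N) + (n3 : ZMod N)},
           {a, a + (n3 : ZMod N), a + (n2 : ZMod N) + (n3 : ZMod N)} } :
          Finset (Finset (ZMod N))) : Set (Finset (ZMod N))) from by simp,
    Set.ncard_coe_finset]
  rw [Finset.card_insert_of_notMem (by simp [h12', h13', h14', h15', h16'])]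
  rw [Finset.card_insert_of_notMem (by simp [h23', h24', h25', h26'])]
  rw [Finset.card_insert_of_notMem (by simp [h34', h35', h36'])]
  rw [Finset.card_insert_of_notMem (by simp [h45', h46'])]
  rw [Finset.card_insert_of_notMem (by simp [h56'])]
  simp
end
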